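/- arXiv:2305.11751 — 5 statements merged into one kernel-verified Lean document; each statement's English description precedes it below -/
import Mathlib

section
/- Let H be a real separable Hilbert space, let P be a Borel probability measure on H belonging to the class P^ℓ(H), and let Q be a Borel probability measure on H whose support is bounded (contained in some ball B(0,M)). Suppose f and g are proper lower semicontinuous convex functions on H and S, T : H → H are Borel maps such that ∂f(x) = {S(x)} and ∂g(x) = {T(x)} for P-almost every x, and such that the pushforwards of P under S and under T both equal Q. Then S(x) = T(x) for P-almost every x. -/
/-!
Fenchel–Young turns the two subgradient maps into one scalar comparison. Writing `f*`, `g*` for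
the conjugates, at `P`-a.e. `x`
  `f*(S x) - g*(S x) ≤ g x - f x ≤ f*(T x) - g*(T x)`,
with equality on the right exactly when `T x ∈ ∂f x`. As `S` and `T` push `P` to the same law,
the two outer quantities are identically distributed real random variables, ordered a.e.; such
variables agree a.e., so `T x ∈ ∂f x = {S x}`.
-/

open MeasureTheory Filter Topology

noncomputable section

/-- The subdifferential of an extended-real-valued function on a Hilbert space. -/
def subdiff {H : Type*} [NormedAddCommGroup H] [InnerProductSpace ℝ H]
    (f : H → EReal) (x : H) : Set H :=
  {y | ∀ z : H, f x + ((inner ℝ y (z - x) : ℝ) : EReal) ≤ f z}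

/-- The graph of the subdifferential. -/
def subdiffGraph {H : Type*} [NormedAddCommGroup H] [InnerProductSpace ℝ H]
    (f : H → EReal) : Set (H × H) :=
  {p | p.2 ∈ subdiff f p.1}

/-- Convexity for extended-real-valued functions. -/
def EConvexOn {H : Type*} [NormedAddCommGroup H] [InnerProductSpace ℝ H]
    (f : H → EReal) : Prop :=
  ∀ x y : H, ∀ t : ℝ, 0 ≤ t → t ≤ 1 →
    f (t • x + (1 - t) • y) ≤ (t : EReal) * f x + ((1 - t : ℝ) : EReal) * f y

/-- A proper lower semicontinuous convex function `H → (-∞, +∞]`. -/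
def ProperLscConvex {H : Type*} [NormedAddCommGroup H] [InnerProductSpace ℝ H]
    (f : H → EReal) : Prop :=
  (∃ x, f x ≠ ⊤) ∧ (∀ x, f x ≠ ⊥) ∧ LowerSemicontinuous f ∧ EConvexOn f

/-- A Lipschitz hypersurface: `{z + τ(z) • v : z ∈ (span v)ᵒᵖ}` for Lipschitz `τ`. -/
def IsLipschitzHypersurface {H : Type*} [NormedAddCommGroup H] [InnerProductSpace ℝ H]
    (A : Set H) : Prop :=
  ∃ v : H, v ≠ 0 ∧ ∃ (τ : H → ℝ) (K : NNReal),
    LipschitzOnWith K τ ((Submodule.span ℝ {v})ᗮ : Set H) ∧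
    A = (fun z : H => z + τ z • v) '' ((Submodule.span ℝ {v})ᗮ : Set H)

/-- Topological support of a measure. -/
def msupport {X : Type*} [TopologicalSpace X] {m : MeasurableSpace X}
    (μ : Measure X) : Set X :=
  {x | ∀ U : Set X, IsOpen U → x ∈ U → 0 < μ U}

/-- The class `P^ℓ(H)`: measures giving zero mass to all Lipschitz hypersurfaces. -/
def IsLipschitzNull {H : Type*} [NormedAddCommGroup H] [InnerProductSpace ℝ H]
    {m : MeasurableSpace H} (P : Measure H) : Prop :=
  ∀ A : Set H, IsLipschitzHypersurface A → P A = 0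

/-- Cyclical monotonicity of a subset of `H × H`. -/
def CyclicallyMonotone {H : Type*} [NormedAddCommGroup H] [InnerProductSpace ℝ H]
    (Γ : Set (H × H)) : Prop :=
  ∀ (n : ℕ) (q : Fin (n + 1) → H × H), (∀ k, q k ∈ Γ) →
    ∑ k : Fin (n + 1), (inner ℝ (q k).1 ((q (k + 1)).2 - (q k).2) : ℝ) ≤ 0

/-- Weak convergence of a sequence of measures against bounded continuous functions. -/
def WeakConv {X : Type*} [TopologicalSpace X] {m : MeasurableSpace X}
    (μ : ℕ → Measure X) (ν : Measure X) : Prop :=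
  ∀ f : BoundedContinuousFunction X ℝ,
    Tendsto (fun n => ∫ x, f x ∂(μ n)) atTop (𝓝 (∫ x, f x ∂ν))

open scoped RealInnerProductSpace
open ProbabilityTheory

theorem ProbabilityTheory.IdentDistrib.ae_eq_of_ae_le {Ω : Type*} [MeasurableSpace Ω]
    {μ : Measure Ω} [IsFiniteMeasure μ] {X Y : Ω → ℝ} (h : IdentDistrib X Y μ μ)
    (hle : X ≤ᵐ[μ] Y) : X =ᵐ[μ] Y := by
  -- After composing with the bounded, strictly increasing `arctan`, equal laws give equal integrals.
  have hφ : IdentDistrib (Real.arctan ∘ X) (Real.arctan ∘ Y) μ μ := h.comp Real.measurable_arctan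
  have hint : Integrable (Real.arctan ∘ X) μ :=
    .of_bound hφ.aemeasurable_fst.aestronglyMeasurable (Real.pi / 2) <| .of_forall fun ω =>
      abs_le.2 ⟨(Real.arctan_mem_Ioo (X ω)).1.le, (Real.arctan_mem_Ioo (X ω)).2.le⟩
  have hφle : Real.arctan ∘ X ≤ᵐ[μ] Real.arctan ∘ Y := hle.mono fun _ => (Real.arctan_mono ·)
  exact ((integral_eq_iff_of_ae_le hint (hφ.integrable_snd hint) hφle).1 hφ.integral_eq).mono
    fun _ => (Real.arctan_injective ·)

section FenchelConjugate

variable {H : Type*} [NormedAddCommGroup H] [InnerProductSpace ℝ H]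

def fenchelConj (f : H → EReal) (y : H) : EReal :=
  ⨆ x, ((⟪x, y⟫ : ℝ) : EReal) - f x

theorem inner_sub_le_fenchelConj (f : H → EReal) (x y : H) :
    ((⟪x, y⟫ : ℝ) : EReal) - f x ≤ fenchelConj f y :=
  le_iSup (fun x => ((⟪x, y⟫ : ℝ) : EReal) - f x) x

theorem measurable_fenchelConj [MeasurableSpace H] [OpensMeasurableSpace H] (f : H → EReal) :
    Measurable (fenchelConj f) :=
  LowerSemicontinuous.measurable <| lowerSemicontinuous_iSup fun x =>
    EReal.lowerSemicontinuous_add.comp (g := fun y => (((⟪x, y⟫ : ℝ) : EReal), -f x))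
      ((continuous_coe_real_ereal.comp (continuous_const.inner continuous_id)).prodMk
        continuous_const)

variable {f g : H → EReal} {x y z : H} {r s : ℝ}

theorem exists_eq_coe_of_mem_subdiff (hz : f z ≠ ⊤) (hx : f x ≠ ⊥) (hy : y ∈ subdiff f x) :
    ∃ r : ℝ, f x = r := by
  have hx' : f x ≠ ⊤ := fun htop => hz <| top_le_iff.1 <| by simpa [htop] using hy z
  exact ⟨(f x).toReal, (EReal.coe_toReal hx' hx).symm⟩

theorem mem_subdiff_iff_fenchelConj_le (hr : f x = r) :
    y ∈ subdiff f x ↔ fenchelConj f y ≤ ((⟪x, y⟫ - r : ℝ) : EReal) := by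
  simp only [subdiff, fenchelConj, iSup_le_iff, Set.mem_ofPred_eq, hr]
  refine forall_congr' fun z => ?_
  rw [inner_sub_right, real_inner_comm y z, real_inner_comm y x]
  induction f z using EReal.rec with
  | bot => simp [-EReal.coe_sub]
  | top => simp
  | coe s => norm_cast; constructor <;> intro <;> linarith

theorem coe_inner_sub_le_fenchelConj (hr : f x = r) :
    ((⟪x, y⟫ - r : ℝ) : EReal) ≤ fenchelConj f y := by
  rw [EReal.coe_sub, ← hr]
  exact inner_sub_le_fenchelConj f x y

theorem inner_sub_le_toReal_fenchelConj (hr : f x = r) (hy : fenchelConj f y ≠ ⊤) :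
    ⟪x, y⟫ - r ≤ (fenchelConj f y).toReal :=
  EReal.coe_le_coe_iff.1 ((coe_inner_sub_le_fenchelConj hr).trans (EReal.le_coe_toReal hy))

theorem fenchelConj_eq_of_mem_subdiff (hr : f x = r) (hy : y ∈ subdiff f x) :
    fenchelConj f y = ((⟪x, y⟫ - r : ℝ) : EReal) :=
  ((mem_subdiff_iff_fenchelConj_le hr).1 hy).antisymm (coe_inner_sub_le_fenchelConj hr)

theorem fenchelConj_ne_top_of_mem_subdiff (hr : f x = r) (hy : y ∈ subdiff f x) :
    fenchelConj f y ≠ ⊤ :=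
  (fenchelConj_eq_of_mem_subdiff hr hy).trans_ne (EReal.coe_ne_top _)

/-- `f* - g*`, meaningful only where both conjugates are finite (`toReal` sends `⊤` to `0`). -/
def fenchelConjDiff (f g : H → EReal) (y : H) : ℝ :=
  (fenchelConj f y).toReal - (fenchelConj g y).toReal

theorem measurable_fenchelConjDiff [MeasurableSpace H] [OpensMeasurableSpace H]
    (f g : H → EReal) : Measurable (fenchelConjDiff f g) :=
  (measurable_fenchelConj f).ereal_toReal.sub (measurable_fenchelConj g).ereal_toReal

theorem fenchelConjDiff_le_of_mem_subdiff (hr : f x = r) (hs : g x = s) (hy : y ∈ subdiff f x)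
    (hg : fenchelConj g y ≠ ⊤) : fenchelConjDiff f g y ≤ s - r := by
  have := inner_sub_le_toReal_fenchelConj hs hg
  rw [fenchelConjDiff, fenchelConj_eq_of_mem_subdiff hr hy, EReal.toReal_coe]
  linarith

theorem le_fenchelConjDiff_of_mem_subdiff (hr : f x = r) (hs : g x = s) (hy : y ∈ subdiff g x)
    (hf : fenchelConj f y ≠ ⊤) : s - r ≤ fenchelConjDiff f g y := by
  have := inner_sub_le_toReal_fenchelConj hr hf
  rw [fenchelConjDiff, fenchelConj_eq_of_mem_subdiff hs hy, EReal.toReal_coe]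
  linarith

theorem mem_subdiff_of_fenchelConjDiff_le (hr : f x = r) (hs : g x = s) (hy : y ∈ subdiff g x)
    (hf : fenchelConj f y ≠ ⊤) (hle : fenchelConjDiff f g y ≤ s - r) : y ∈ subdiff f x := by
  rw [fenchelConjDiff, fenchelConj_eq_of_mem_subdiff hs hy, EReal.toReal_coe] at hle
  refine (mem_subdiff_iff_fenchelConj_le hr).2 ((EReal.le_coe_toReal hf).trans ?_)
  exact EReal.coe_le_coe_iff.2 (by linarith)

end FenchelConjugate

theorem mccann_uniqueness_hilbert_general
    {H : Type*} [NormedAddCommGroup H] [InnerProductSpace ℝ H]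
    [MeasurableSpace H] [BorelSpace H]
    (P Q : Measure H) [IsProbabilityMeasure P]
    (f g : H → EReal) (hf : ProperLscConvex f) (hg : ProperLscConvex g)
    (S T : H → H) (hSm : Measurable S) (hTm : Measurable T)
    (hfS : ∀ᵐ x ∂P, subdiff f x = {S x}) (hgT : ∀ᵐ x ∂P, subdiff g x = {T x})
    (hSQ : P.map S = Q) (hTQ : P.map T = Q) :
    ∀ᵐ x ∂P, S x = T x := by
  obtain ⟨⟨x₀, hfx₀⟩, hf_ne_bot, -⟩ := hf
  obtain ⟨⟨z₀, hgz₀⟩, hg_ne_bot, -⟩ := hg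
  have hId : IdentDistrib S T P P :=
    ⟨hSm.aemeasurable, hTm.aemeasurable, hSQ.trans hTQ.symm⟩
  have hS : ∀ᵐ x ∂P, S x ∈ subdiff f x := hfS.mono fun x hx => hx ▸ rfl
  have hT : ∀ᵐ x ∂P, T x ∈ subdiff g x := hgT.mono fun x hx => hx ▸ rfl
  have hreal : ∀ᵐ x ∂P, ∃ r s : ℝ, f x = r ∧ g x = s := by
    filter_upwards [hS, hT] with x hSx hTx
    obtain ⟨r, hr⟩ := exists_eq_coe_of_mem_subdiff hfx₀ (hf_ne_bot x) hSx
    obtain ⟨s, hs⟩ := exists_eq_coe_of_mem_subdiff hgz₀ (hg_ne_bot x) hTx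
    exact ⟨r, s, hr, hs⟩
  -- `f* ∘ S` is finite a.e., hence so is `f* ∘ T`, which has the same law; likewise for `g*`.
  have hFT : ∀ᵐ x ∂P, fenchelConj f (T x) ≠ ⊤ :=
    hId.ae_snd ((measurable_fenchelConj f) (measurableSet_singleton ⊤)).compl <| by
      filter_upwards [hreal, hS] with x ⟨r, _, hr, _⟩ hSx
      exact fenchelConj_ne_top_of_mem_subdiff hr hSx
  have hGS : ∀ᵐ x ∂P, fenchelConj g (S x) ≠ ⊤ :=
    hId.symm.ae_snd ((measurable_fenchelConj g) (measurableSet_singleton ⊤)).compl <| by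
      filter_upwards [hreal, hT] with x ⟨_, s, _, hs⟩ hTx
      exact fenchelConj_ne_top_of_mem_subdiff hs hTx
  have hle : ∀ᵐ x ∂P, fenchelConjDiff f g (S x) ≤ fenchelConjDiff f g (T x) := by
    filter_upwards [hreal, hS, hT, hFT, hGS] with x ⟨r, s, hr, hs⟩ hSx hTx hF hG
    exact (fenchelConjDiff_le_of_mem_subdiff hr hs hSx hG).trans
      (le_fenchelConjDiff_of_mem_subdiff hr hs hTx hF)
  have heq := (hId.comp (measurable_fenchelConjDiff f g)).ae_eq_of_ae_le hle
  filter_upwards [hreal, hfS, hS, hT, hFT, hGS, heq] with x ⟨r, s, hr, hs⟩ hx hSx hTx hF hG hD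
  have hTf : T x ∈ subdiff f x := mem_subdiff_of_fenchelConjDiff_le hr hs hTx hF
    (hD.ge.trans (fenchelConjDiff_le_of_mem_subdiff hr hs hSx hG))
  exact (hx ▸ hTf : T x ∈ ({S x} : Set H)).symm

theorem mccann_uniqueness_hilbert
    {H : Type*} [NormedAddCommGroup H] [InnerProductSpace ℝ H]
    [CompleteSpace H] [SecondCountableTopology H] [MeasurableSpace H] [BorelSpace H]
    (P Q : Measure H) [IsProbabilityMeasure P] [IsProbabilityMeasure Q]
    (hP : IsLipschitzNull P)
    (M : ℝ) (hQbdd : msupport Q ⊆ Metric.closedBall (0 : H) M)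
    (f g : H → EReal) (hf : ProperLscConvex f) (hg : ProperLscConvex g)
    (S T : H → H) (hSm : Measurable S) (hTm : Measurable T)
    (hfS : ∀ᵐ x ∂P, subdiff f x = {S x}) (hgT : ∀ᵐ x ∂P, subdiff g x = {T x})
    (hSQ : P.map S = Q) (hTQ : P.map T = Q) :
    ∀ᵐ x ∂P, S x = T x :=
  mccann_uniqueness_hilbert_general P Q f g hf hg S T hSm hTm hfS hgT hSQ hTQ

end
end

section
/- Let H be a real separable Hilbert space and let f, g : H → (-∞,+∞] be proper lower semicontinuous convex functions. Let p, q ∈ H be points at which both f and g are finite and continuous, and suppose f(p) − f(q) = g(p) − g(q). Then there exist t ∈ (0,1), u ∈ ∂f(x_t), and v ∈ ∂g(x_t), where x_t := t·p + (1−t)·q, such that ⟨u − v, p − q⟩ = 0. -/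
open MeasureTheory Filter Topology

noncomputable section

/-!
Along the segment, `t ↦ f(x_t) - g(x_t)` is continuous on `[0, 1]` and takes equal values at the
endpoints, so it has an interior extremum; by symmetry in `f` and `g` we may take it to be a
minimum at `t₀`. A one-sided derivative `s` of the convex function `t ↦ g(x_t)` at `t₀` gives an
affine minorant of slope `s` touching at `t₀`, and minimality makes it a minorant of `t ↦ f(x_t)`
too. Since `f` and `g` are bounded above near `x_{t₀}` (convexity and continuity at `p`), separating
the interior of the epigraph from the graph of this minorant extends it to a subgradient `u` with
`⟪u, p - q⟫ = s`, for `f` as for `g`.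
-/

open Set

lemma Convex.le_of_forall_mem_interior_lt {E : Type*} [AddCommGroup E] [Module ℝ E]
    [TopologicalSpace E] [IsTopologicalAddGroup E] [ContinuousSMul ℝ E] {S : Set E}
    (hS : Convex ℝ S) (hS' : (interior S).Nonempty) {g : E → ℝ} (hg : Continuous g) {c : ℝ}
    (h : ∀ e ∈ interior S, g e < c) : ∀ e ∈ S, g e ≤ c := by
  have : closure (interior S) ⊆ {e | g e ≤ c} :=
    closure_minimal (fun e he => (h e he).le) (isClosed_le hg continuous_const)
  rw [hS.closure_interior_eq_closure_of_nonempty_interior hS'] at this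
  exact fun e he => this (subset_closure he)

section

variable {X : Type*} [TopologicalSpace X] {f : X → EReal}

lemma mem_interior_epigraph {x : X} {c α : ℝ} (hbdd : ∀ᶠ z in 𝓝 x, f z ≤ c) (hα : c < α) :
    (x, α) ∈ interior {e : X × ℝ | f e.1 ≤ e.2} := by
  rw [mem_interior_iff_mem_nhds, nhds_prod_eq]
  filter_upwards [hbdd.prod_mk (Ioi_mem_nhds hα)] with e ⟨hz, hα'⟩
  exact hz.trans (EReal.coe_le_coe_iff.2 (le_of_lt hα'))

lemma notMem_interior_epigraph {z : X} {α : ℝ} (h : (α : EReal) ≤ f z) :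
    (z, α) ∉ interior {e : X × ℝ | f e.1 ≤ e.2} := fun he => by
  obtain ⟨β, hβα, hβ⟩ := (((continuous_const.prodMk continuous_id).tendsto α).eventually
    (mem_interior_iff_mem_nhds.1 he)).exists_lt
  exact (EReal.coe_lt_coe_iff.2 hβα).not_ge (h.trans hβ)

end

lemma ConvexOn.le_add_leftDeriv_mul_sub {S : Set ℝ} {φ : ℝ → ℝ} {x y : ℝ}
    (hφ : ConvexOn ℝ S φ) (hx : x ∈ interior S) (hy : y ∈ S) :
    φ x + derivWithin φ (Iio x) x * (y - x) ≤ φ y := by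
  rcases lt_trichotomy y x with hyx | rfl | hxy
  · have := hφ.slope_le_leftDeriv_of_mem_interior hy hx hyx
    rw [slope_def_field, div_le_iff₀ (sub_pos.2 hyx)] at this
    linarith
  · simp
  · have := (hφ.leftDeriv_le_rightDeriv_of_mem_interior hx).trans
      (hφ.rightDeriv_le_slope_of_mem_interior hx hy hxy)
    rw [slope_def_field, le_div_iff₀ (sub_pos.2 hxy)] at this
    linarith

section

open AffineMap

variable {H : Type*} [NormedAddCommGroup H] [InnerProductSpace ℝ H] {f : H → EReal} {p q : H}

lemma mem_subdiff_of_supporting_epigraph [CompleteSpace H] {ℓ : H →L[ℝ] ℝ} {β a : ℝ} {x : H}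
    (hβ : β < 0) (hfx : f x = a) (h : ∀ z (b : ℝ), f z ≤ b → ℓ z + b * β ≤ ℓ x + a * β) :
    (-β)⁻¹ • (InnerProductSpace.toDual ℝ H).symm ℓ ∈ subdiff f x := by
  intro z
  rw [hfx, ← EReal.le_of_forall_lt_iff_le]
  intro b hb
  have hinner : (-β)⁻¹ * (ℓ z - ℓ x) ≤ b - a := by
    rw [inv_mul_le_iff₀ (neg_pos.2 hβ)]
    linarith [h z b hb.le]
  rw [real_inner_smul_left, InnerProductSpace.toDual_symm_apply, map_sub, ← EReal.coe_add,
    EReal.coe_le_coe_iff]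
  linarith

namespace EConvexOn

lemma apply_combo_le (hf : EConvexOn f) {x y : H} {a b t : ℝ} (ht₀ : 0 ≤ t) (ht₁ : t ≤ 1)
    (hx : f x ≤ a) (hy : f y ≤ b) :
    f (t • x + (1 - t) • y) ≤ ((t * a + (1 - t) * b : ℝ) : EReal) :=
  calc f (t • x + (1 - t) • y) ≤ (t : EReal) * f x + ((1 - t : ℝ) : EReal) * f y :=
        hf x y t ht₀ ht₁
    _ ≤ (t : EReal) * a + ((1 - t : ℝ) : EReal) * b := by gcongr
    _ = ((t * a + (1 - t) * b : ℝ) : EReal) := by norm_cast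

lemma convex_epigraph (hf : EConvexOn f) : Convex ℝ {e : H × ℝ | f e.1 ≤ e.2} := by
  rintro ⟨x, a⟩ hx ⟨y, b⟩ hy t t' ht ht' htt'
  obtain rfl : t' = 1 - t := by linarith
  exact hf.apply_combo_le ht (by linarith) hx hy

lemma convexOn_toReal (hf : EConvexOn f) (hbot : ∀ x, f x ≠ ⊥) :
    ConvexOn ℝ {x | f x ≠ ⊤} (fun x => (f x).toReal) := by
  have hcombo : ∀ x ∈ {x | f x ≠ ⊤}, ∀ y ∈ {x | f x ≠ ⊤}, ∀ t : ℝ, 0 ≤ t → t ≤ 1 →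
      f (t • x + (1 - t) • y) ≤ ((t * (f x).toReal + (1 - t) * (f y).toReal : ℝ) : EReal) :=
    fun x hx y hy t ht₀ ht₁ =>
      hf.apply_combo_le ht₀ ht₁ (EReal.le_coe_toReal hx) (EReal.le_coe_toReal hy)
  refine ⟨fun x hx y hy t t' ht ht' htt' => ?_, fun x hx y hy t t' ht ht' htt' => ?_⟩ <;>
    obtain rfl : t' = 1 - t := by linarith
  · exact ne_top_of_le_ne_top (EReal.coe_ne_top _) (hcombo x hx y hy t ht (by linarith))
  · exact (EReal.toReal_le_toReal (hcombo x hx y hy t ht (by linarith)) (hbot _)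
      (EReal.coe_ne_top _)).trans_eq (EReal.toReal_coe _)

lemma convexOn_toReal_lineMap (hf : EConvexOn f) (hbot : ∀ x, f x ≠ ⊥) (hp : f p ≠ ⊤)
    (hq : f q ≠ ⊤) : ConvexOn ℝ (Icc (0 : ℝ) 1) (fun t => (f (lineMap q p t)).toReal) :=
  ((hf.convexOn_toReal hbot).comp_affineMap (lineMap q p)).subset
    (fun _ ht => (hf.convexOn_toReal hbot).1.lineMap_mem hq hp ht) (convex_Icc 0 1)

lemma continuousOn_toReal_lineMap (hf : EConvexOn f) (hbot : ∀ x, f x ≠ ⊥) (hp : f p ≠ ⊤)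
    (hq : f q ≠ ⊤) (hpc : ContinuousAt f p) (hqc : ContinuousAt f q) :
    ContinuousOn (fun t => (f (lineMap q p t)).toReal) (Icc (0 : ℝ) 1) := by
  have hend : ∀ {y : H} {t : ℝ}, f y ≠ ⊤ → ContinuousAt f y → lineMap q p t = y →
      ContinuousWithinAt (fun t => (f (lineMap q p t)).toReal) (Icc 0 1) t :=
    fun hy hyc ht => (ContinuousAt.comp_of_eq (g := fun z => (f z).toReal)
      ((EReal.tendsto_toReal hy (hbot _)).comp hyc) lineMap_continuous.continuousAt
      ht).continuousWithinAt
  intro t ht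
  rcases eq_endpoints_or_mem_Ioo_of_mem_Icc ht with rfl | rfl | ht'
  · exact hend hq hqc (lineMap_apply_zero _ _)
  · exact hend hp hpc (lineMap_apply_one _ _)
  · rw [← interior_Icc] at ht'
    exact ((hf.convexOn_toReal_lineMap hbot hp hq).continuousOn_interior.continuousAt
      (isOpen_interior.mem_nhds ht')).continuousWithinAt

lemma eventually_le_lineMap (hf : EConvexOn f) {b c t : ℝ} (hbdd : ∀ᶠ z in 𝓝 p, f z ≤ c)
    (hq : f q ≤ b) (ht₀ : 0 < t) (ht₁ : t ≤ 1) :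
    ∀ᶠ z in 𝓝 (lineMap q p t), f z ≤ ((t * c + (1 - t) * b : ℝ) : EReal) := by
  set x := lineMap q p t
  have hlim : Tendsto (fun z => p + t⁻¹ • (z - x)) (𝓝 x) (𝓝 p) :=
    Continuous.tendsto' (by fun_prop) x p (by simp)
  filter_upwards [hlim.eventually hbdd] with z hz
  have hz' : t • (p + t⁻¹ • (z - x)) + (1 - t) • q = z := by
    rw [smul_add, smul_inv_smul₀ ht₀.ne']
    simp only [x, lineMap_apply_module]
    module
  have := hf.apply_combo_le ht₀.le ht₁ hz hq
  rwa [hz'] at this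

lemma exists_supporting_functional (hf : EConvexOn f) {x w : H} {a s c : ℝ}
    (hfx : f x = a) (hbdd : ∀ᶠ z in 𝓝 x, f z ≤ c)
    (hline : ∀ᶠ r in 𝓝 (0 : ℝ), ((a + s * r : ℝ) : EReal) ≤ f (x + r • w)) :
    ∃ (ℓ : H →L[ℝ] ℝ) (β : ℝ), β < 0 ∧ ℓ w + s * β = 0 ∧
      ∀ z (b : ℝ), f z ≤ b → ℓ z + b * β ≤ ℓ x + a * β := by
  set epi := {e : H × ℝ | f e.1 ≤ e.2}
  obtain ⟨ε, hε, hεline⟩ := Metric.eventually_nhds_iff.1 hline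
  set M := (fun r : ℝ => (x + r • w, a + s * r)) '' Metric.ball 0 ε
  have hM : Convex ℝ M := by
    have hMeq : M = (lineMap (x, a) (x + w, a + s) : ℝ →ᵃ[ℝ] H × ℝ) ''
        Metric.ball 0 ε := by
      refine image_congr fun r _ => ?_
      rw [lineMap_apply_module', add_comm]
      simp [mul_comm, add_comm]
    rw [hMeq]
    exact (convex_ball 0 ε).affine_image _
  have hxc : (x, c + 1) ∈ interior epi := mem_interior_epigraph hbdd (lt_add_one c)
  have hdisj : Disjoint (interior epi) M := by
    rw [Set.disjoint_left]
    rintro _ he ⟨r, hr, rfl⟩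
    exact notMem_interior_epigraph (hεline hr) he
  obtain ⟨L, c₀, hlt, hge⟩ :=
    geometric_hahn_banach_open hf.convex_epigraph.interior isOpen_interior hM hdisj
  have hle : ∀ e ∈ epi, L e ≤ c₀ :=
    hf.convex_epigraph.le_of_forall_mem_interior_lt ⟨_, hxc⟩ L.continuous hlt
  set ℓ := L.comp (ContinuousLinearMap.inl ℝ H ℝ)
  set β := L (0, 1)
  have hL : ∀ z α, L (z, α) = ℓ z + α * β := fun z α => by
    rw [show ((z, α) : H × ℝ) = (z, 0) + α • (0, 1) by simp, map_add, map_smul, smul_eq_mul]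
    rfl
  have hx_epi : ℓ x + a * β ≤ c₀ := hL x a ▸ hle (x, a) hfx.le
  have hgraph : ∀ r ∈ Metric.ball (0 : ℝ) ε, c₀ ≤ ℓ x + a * β + r * (ℓ w + s * β) := fun r hr => by
    have := hge _ ⟨r, hr, rfl⟩
    rw [hL, map_add, map_smul, smul_eq_mul] at this
    linarith
  refine ⟨ℓ, β, ?_, ?_, fun z b hzb => ?_⟩
  · have hac : a ≤ c := by exact_mod_cast hfx ▸ hbdd.self_of_nhds
    have := hL x (c + 1) ▸ hlt _ hxc
    nlinarith [hgraph 0 (Metric.mem_ball_self hε)]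
  · have hpos := hgraph (ε / 2) (by simp [abs_of_pos hε]; linarith)
    have hneg := hgraph (-(ε / 2)) (by simp [abs_of_pos hε]; linarith)
    nlinarith
  · calc ℓ z + b * β = L (z, b) := (hL z b).symm
      _ ≤ c₀ := hle (z, b) hzb
      _ ≤ ℓ x + a * β := by simpa using hgraph 0 (Metric.mem_ball_self hε)

lemma exists_mem_subdiff_inner_eq [CompleteSpace H] (hf : EConvexOn f)
    {x w : H} {a s c : ℝ} (hfx : f x = a) (hbdd : ∀ᶠ z in 𝓝 x, f z ≤ c)
    (hline : ∀ᶠ r in 𝓝 (0 : ℝ), ((a + s * r : ℝ) : EReal) ≤ f (x + r • w)) :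
    ∃ u ∈ subdiff f x, inner ℝ u w = s := by
  obtain ⟨ℓ, β, hβ, hslope, hsupp⟩ := hf.exists_supporting_functional hfx hbdd hline
  refine ⟨_, mem_subdiff_of_supporting_epigraph hβ hfx hsupp, ?_⟩
  rw [real_inner_smul_left, InnerProductSpace.toDual_symm_apply,
    show ℓ w = -β * s by linarith, ← mul_assoc, inv_mul_cancel₀ (neg_ne_zero.2 hβ.ne), one_mul]

lemma exists_mem_subdiff_lineMap_inner_eq [CompleteSpace H] (hf : EConvexOn f) (hbot : ∀ x, f x ≠ ⊥)
    (hp : f p ≠ ⊤) (hq : f q ≠ ⊤) (hpc : ContinuousAt f p) {t₀ s : ℝ} (ht₀ : t₀ ∈ Ioo 0 1)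
    (hs : ∀ t ∈ Icc (0 : ℝ) 1,
      (f (lineMap q p t₀)).toReal + s * (t - t₀) ≤ (f (lineMap q p t)).toReal) :
    ∃ u ∈ subdiff f (lineMap q p t₀), inner ℝ u (p - q) = s := by
  have hfin : ∀ t ∈ Icc (0 : ℝ) 1, f (lineMap q p t) = (f (lineMap q p t)).toReal :=
    fun t ht => (EReal.coe_toReal ((hf.convexOn_toReal hbot).1.lineMap_mem hq hp ht)
      (hbot _)).symm
  obtain ⟨c, hc⟩ : ∃ c : ℝ, ∀ᶠ z in 𝓝 p, f z ≤ c :=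
    ⟨(f p).toReal + 1, hpc.eventually (eventually_le_nhds ((EReal.le_coe_toReal hp).trans_lt
      (EReal.coe_lt_coe_iff.2 (lt_add_one _))))⟩
  refine hf.exists_mem_subdiff_inner_eq (hfin t₀ (Ioo_subset_Icc_self ht₀))
    (hf.eventually_le_lineMap hc (EReal.le_coe_toReal hq) ht₀.1 ht₀.2.le) ?_
  have hnear : ∀ᶠ r in 𝓝 (0 : ℝ), t₀ + r ∈ Icc (0 : ℝ) 1 :=
    (Continuous.tendsto' (by fun_prop) 0 t₀ (add_zero t₀)).eventually
      (Icc_mem_nhds ht₀.1 ht₀.2)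
  filter_upwards [hnear] with r hr
  rw [show lineMap q p t₀ + r • (p - q) = lineMap q p (t₀ + r) by
      simp only [lineMap_apply_module']; module, hfin _ hr, EReal.coe_le_coe_iff]
  linarith [hs _ hr]

end EConvexOn

lemma exists_mem_subdiff_inner_eq_of_isMinOn [CompleteSpace H] {g : H → EReal}
    (hf : EConvexOn f) (hg : EConvexOn g) (hfbot : ∀ x, f x ≠ ⊥) (hgbot : ∀ x, g x ≠ ⊥)
    (hfp : f p ≠ ⊤) (hfq : f q ≠ ⊤) (hgp : g p ≠ ⊤) (hgq : g q ≠ ⊤)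
    (hfpc : ContinuousAt f p) (hgpc : ContinuousAt g p) {t₀ : ℝ} (ht₀ : t₀ ∈ Ioo 0 1)
    (hmin : IsMinOn (fun t => (f (lineMap q p t)).toReal - (g (lineMap q p t)).toReal)
      (Icc 0 1) t₀) :
    ∃ u ∈ subdiff f (lineMap q p t₀), ∃ v ∈ subdiff g (lineMap q p t₀),
      inner ℝ u (p - q) = inner ℝ v (p - q) := by
  set s := derivWithin (fun t => (g (lineMap q p t)).toReal) (Iio t₀) t₀
  have hgs : ∀ t ∈ Icc (0 : ℝ) 1,
      (g (lineMap q p t₀)).toReal + s * (t - t₀) ≤ (g (lineMap q p t)).toReal :=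
    fun t ht => (hg.convexOn_toReal_lineMap hgbot hgp hgq).le_add_leftDeriv_mul_sub
      (by rwa [interior_Icc]) ht
  have hfs : ∀ t ∈ Icc (0 : ℝ) 1,
      (f (lineMap q p t₀)).toReal + s * (t - t₀) ≤ (f (lineMap q p t)).toReal :=
    fun t ht => by linarith [hgs t ht, isMinOn_iff.1 hmin t ht]
  obtain ⟨u, hu, hus⟩ := hf.exists_mem_subdiff_lineMap_inner_eq hfbot hfp hfq hfpc ht₀ hfs
  obtain ⟨v, hv, hvs⟩ := hg.exists_mem_subdiff_lineMap_inner_eq hgbot hgp hgq hgpc ht₀ hgs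
  exact ⟨u, hu, v, hv, hus.trans hvs.symm⟩

end

theorem mean_value_convex_hilbert_general
    {H : Type*} [NormedAddCommGroup H] [InnerProductSpace ℝ H]
    [CompleteSpace H]
    (f g : H → EReal) (hf : ProperLscConvex f) (hg : ProperLscConvex g)
    (p q : H)
    (hfp : f p ≠ ⊤) (hfq : f q ≠ ⊤) (hgp : g p ≠ ⊤) (hgq : g q ≠ ⊤)
    (hfpc : ContinuousAt f p) (hfqc : ContinuousAt f q)
    (hgpc : ContinuousAt g p) (hgqc : ContinuousAt g q)
    (heq : f p + g q = g p + f q) :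
    ∃ t : ℝ, 0 < t ∧ t < 1 ∧
      ∃ u ∈ subdiff f (t • p + (1 - t) • q),
        ∃ v ∈ subdiff g (t • p + (1 - t) • q),
          (inner ℝ (u - v) (p - q) : ℝ) = 0 := by
  obtain ⟨-, hfbot, -, hf : EConvexOn f⟩ := hf
  obtain ⟨-, hgbot, -, hg : EConvexOn g⟩ := hg
  set φ : ℝ → ℝ := fun t =>
    (f (AffineMap.lineMap q p t)).toReal - (g (AffineMap.lineMap q p t)).toReal
  have hφ : ContinuousOn φ (Icc (0 : ℝ) 1) :=
    (hf.continuousOn_toReal_lineMap hfbot hfp hfq hfpc hfqc).sub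
      (hg.continuousOn_toReal_lineMap hgbot hgp hgq hgpc hgqc)
  have hφ01 : φ 0 = φ 1 := by
    rw [← EReal.coe_toReal hfp (hfbot p), ← EReal.coe_toReal hfq (hfbot q),
      ← EReal.coe_toReal hgp (hgbot p), ← EReal.coe_toReal hgq (hgbot q)] at heq
    norm_cast at heq
    simp only [φ, AffineMap.lineMap_apply_zero, AffineMap.lineMap_apply_one]
    linarith
  obtain ⟨t₀, ht₀, hext⟩ := exists_Ioo_extr_on_Icc zero_lt_one hφ hφ01
  refine ⟨t₀, ht₀.1, ht₀.2, ?_⟩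
  rw [add_comm, ← AffineMap.lineMap_apply_module]
  rcases hext with hmin | hmax
  · obtain ⟨u, hu, v, hv, huv⟩ := exists_mem_subdiff_inner_eq_of_isMinOn hf hg hfbot hgbot
      hfp hfq hgp hgq hfpc hgpc ht₀ hmin
    exact ⟨u, hu, v, hv, by rw [inner_sub_left, huv, sub_self]⟩
  · obtain ⟨v, hv, u, hu, hvu⟩ := exists_mem_subdiff_inner_eq_of_isMinOn hg hf hgbot hfbot
      hgp hgq hfp hfq hgpc hfpc ht₀ (by simpa only [φ, neg_sub] using IsMaxOn.neg hmax)
    exact ⟨u, hu, v, hv, by rw [inner_sub_left, hvu, sub_self]⟩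

theorem mean_value_convex_hilbert
    {H : Type*} [NormedAddCommGroup H] [InnerProductSpace ℝ H]
    [CompleteSpace H] [SecondCountableTopology H]
    (f g : H → EReal) (hf : ProperLscConvex f) (hg : ProperLscConvex g)
    (p q : H)
    (hfp : f p ≠ ⊤) (hfq : f q ≠ ⊤) (hgp : g p ≠ ⊤) (hgq : g q ≠ ⊤)
    (hfpc : ContinuousAt f p) (hfqc : ContinuousAt f q)
    (hgpc : ContinuousAt g p) (hgqc : ContinuousAt g q)
    (heq : f p + g q = g p + f q) :
    ∃ t : ℝ, 0 < t ∧ t < 1 ∧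
      ∃ u ∈ subdiff f (t • p + (1 - t) • q),
        ∃ v ∈ subdiff g (t • p + (1 - t) • q),
          (inner ℝ (u - v) (p - q) : ℝ) = 0 :=
  mean_value_convex_hilbert_general f g hf hg p q hfp hfq hgp hgq hfpc hfqc hgpc hgqc heq
end
end

section
/- Let H be a real separable Hilbert space and let f, g : H → (-∞,+∞] be proper lower semicontinuous convex functions. Suppose p ∈ H is a point at which both f and g are finite and continuous, both ∂f(p) and ∂g(p) are singletons {∇f(p)} and {∇g(p)}, and ∇f(p) ≠ ∇g(p) = 0 while f(p) = g(p) = 0. Define X := {x ∈ H : ∂g(x) is a singleton {∇g(x)} and there exists h ∈ H with f(h) > g(h) and ∇g(x) ∈ ∂f(h)}. Then there exists ε > 0 such that ‖x − p‖ ≥ ε for every x ∈ X. -/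
/-!
Since `0 ∉ ∂f(p)` there is `z₀` with `f z₀ < c < 0`. If `y ∈ ∂g(x) ∩ ∂f(h)` with `g h < f h`,
chaining the two subgradient inequalities through `h` gives `⟪y, x - z₀⟫ > g x - c ≥ -c`.
On the other hand `∂g(p) = {0}` forces every directional derivative of `g` at `p` to vanish
(Hahn–Banach and Riesz), and convexity then makes `⟪y, v⟫` small for subgradients `y` at points
near `p` and directions `v` near `p - z₀`. Taking `v = x - z₀` shows that `x` stays away from `p`.
-/

open MeasureTheory Filter Topology

noncomputable section

section Subdifferential

open scoped Pointwise

variable {H : Type*} [NormedAddCommGroup H] [InnerProductSpace ℝ H] {f g : H → EReal} {p : H}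

lemma nonneg_of_zero_mem_subdiff (hgp : (0 : H) ∈ subdiff g p) (hgp0 : g p = 0) (z : H) :
    0 ≤ g z := by
  simpa [hgp0] using hgp z

lemma exists_lt_of_zero_notMem_subdiff (h : (0 : H) ∉ subdiff f p) : ∃ z, f z < f p := by
  by_contra! hf
  exact h fun z => by simpa using hf z

lemma add_inner_lt_of_mem_subdiff {x h y : H} (hgx : y ∈ subdiff g x) (hfh : y ∈ subdiff f h)
    (hlt : g h < f h) (z : H) : g x + (inner ℝ y (z - x) : EReal) < f z :=
  calc g x + (inner ℝ y (z - x) : EReal)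
      = g x + (inner ℝ y (h - x) : EReal) + (inner ℝ y (z - h) : EReal) := by
        rw [add_assoc, ← EReal.coe_add, ← inner_add_right, sub_add_sub_cancel']
    _ ≤ g h + (inner ℝ y (z - h) : EReal) := add_le_add_left (hgx h) _
    _ < f h + (inner ℝ y (z - h) : EReal) := EReal.add_lt_add_right_coe hlt _
    _ ≤ f z := hfh z

lemma EConvexOn.le_mul_of_eq_zero (hconv : EConvexOn g) (hgp0 : g p = 0) (x : H) {s : ℝ}
    (hs0 : 0 ≤ s) (hs1 : s ≤ 1) : g (p + s • (x - p)) ≤ (s : EReal) * g x := by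
  have h := hconv x p s hs0 hs1
  rwa [hgp0, mul_zero, add_zero, show s • x + (1 - s) • p = p + s • (x - p) by module] at h

def upperSlopes (g : H → EReal) (p u : H) : Set ℝ :=
  {a | ∃ t > 0, g (p + t • u) ≤ ((a * t : ℝ) : EReal)}

/-- For convex `g` with `g p = 0`, `dirDeriv g p u` is the one-sided directional derivative of `g`
at `p` in direction `u`. The real `sInf` is junk unless the set of slopes is nonempty and bounded
below, which holds when `0 ≤ g` and `g` is bounded above near `p`. -/
def dirDeriv (g : H → EReal) (p u : H) : ℝ := sInf (upperSlopes g p u)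

lemma upperSlopes_smul {c : ℝ} (hc : 0 < c) (u : H) :
    upperSlopes g p (c • u) = c • upperSlopes g p u := by
  ext a
  rw [Set.mem_smul_set]
  constructor
  · rintro ⟨t, ht, hgt⟩
    refine ⟨a / c, ⟨t * c, by positivity, ?_⟩, by rw [smul_eq_mul]; field_simp⟩
    rwa [mul_smul, show a / c * (t * c) = a * t by field_simp]
  · rintro ⟨b, ⟨t, ht, hgt⟩, rfl⟩
    refine ⟨t / c, by positivity, ?_⟩
    rwa [smul_smul, div_mul_cancel₀ _ hc.ne', smul_eq_mul,
      show c * b * (t / c) = b * t by field_simp]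

lemma dirDeriv_smul {c : ℝ} (hc : 0 < c) (u : H) :
    dirDeriv g p (c • u) = c * dirDeriv g p u := by
  rw [dirDeriv, upperSlopes_smul hc, Real.sInf_smul_of_nonneg hc.le, smul_eq_mul, dirDeriv]

lemma EConvexOn.le_mul_of_le_mul (hconv : EConvexOn g) (hgp0 : g p = 0) {u : H} {a s t : ℝ}
    (hgt : g (p + t • u) ≤ ((a * t : ℝ) : EReal)) (hs : 0 < s) (hst : s ≤ t) :
    g (p + s • u) ≤ ((a * s : ℝ) : EReal) := by
  have ht : 0 < t := hs.trans_le hst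
  have h := hconv.le_mul_of_eq_zero hgp0 (p + t • u) (div_pos hs ht).le ((div_le_one ht).2 hst)
  rw [add_sub_cancel_left, smul_smul, div_mul_cancel₀ _ ht.ne'] at h
  calc g (p + s • u) ≤ ((s / t : ℝ) : EReal) * g (p + t • u) := h
    _ ≤ ((s / t : ℝ) : EReal) * ((a * t : ℝ) : EReal) := by gcongr
    _ = ((a * s : ℝ) : EReal) := by rw [← EReal.coe_mul]; congr 1; field_simp

lemma EConvexOn.upperSlopes_add_subset (hconv : EConvexOn g) (hgp0 : g p = 0) (u₁ u₂ : H) :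
    upperSlopes g p u₁ + upperSlopes g p u₂ ⊆ upperSlopes g p (u₁ + u₂) := by
  rintro _ ⟨a₁, ⟨t₁, ht₁, hgt₁⟩, a₂, ⟨t₂, ht₂, hgt₂⟩, rfl⟩
  set t := min t₁ t₂
  have ht : 0 < t := lt_min ht₁ ht₂
  have h₁ := hconv.le_mul_of_le_mul hgp0 hgt₁ ht (min_le_left _ _)
  have h₂ := hconv.le_mul_of_le_mul hgp0 hgt₂ ht (min_le_right _ _)
  refine ⟨t / 2, half_pos ht, ?_⟩
  calc g (p + (t / 2) • (u₁ + u₂))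
      = g ((1 / 2 : ℝ) • (p + t • u₁) + (1 - 1 / 2 : ℝ) • (p + t • u₂)) := by congr 1; module
    _ ≤ ((1 / 2 : ℝ) : EReal) * g (p + t • u₁) + ((1 - 1 / 2 : ℝ) : EReal) * g (p + t • u₂) :=
        hconv _ _ _ (by norm_num) (by norm_num)
    _ ≤ ((1 / 2 : ℝ) : EReal) * ((a₁ * t : ℝ) : EReal)
          + ((1 - 1 / 2 : ℝ) : EReal) * ((a₂ * t : ℝ) : EReal) := by
        gcongr
    _ = (((a₁ + a₂) * (t / 2) : ℝ) : EReal) := by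
        rw [← EReal.coe_mul, ← EReal.coe_mul, ← EReal.coe_add]; congr 1; ring

lemma upperSlopes_bddBelow (hg0 : ∀ z, 0 ≤ g z) (u : H) : BddBelow (upperSlopes g p u) := by
  refine ⟨0, fun a ⟨t, ht, hgt⟩ => ?_⟩
  have : (0 : ℝ) ≤ a * t := by exact_mod_cast (hg0 _).trans hgt
  exact nonneg_of_mul_nonneg_left this ht

lemma mem_upperSlopes_of_ball_subset (hgp0 : g p = 0) {r : ℝ} (hr : 0 < r)
    (hball : Metric.ball p r ⊆ {x | g x < 1}) (u : H) : 2 / r * ‖u‖ ∈ upperSlopes g p u := by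
  rcases eq_or_ne u 0 with rfl | hu
  · exact ⟨1, one_pos, by simp [hgp0]⟩
  have hnu : 0 < ‖u‖ := norm_pos_iff.2 hu
  refine ⟨r / (2 * ‖u‖), by positivity, ?_⟩
  have hmem : p + (r / (2 * ‖u‖)) • u ∈ Metric.ball p r := by
    rw [mem_ball_iff_norm, add_sub_cancel_left, norm_smul, Real.norm_of_nonneg (by positivity)]
    field_simp
    linarith
  rw [show 2 / r * ‖u‖ * (r / (2 * ‖u‖)) = 1 by field_simp]
  exact_mod_cast (hball hmem).le

lemma upperSlopes_nonempty (hgp0 : g p = 0) {r : ℝ} (hr : 0 < r)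
    (hball : Metric.ball p r ⊆ {x | g x < 1}) (u : H) : (upperSlopes g p u).Nonempty :=
  ⟨_, mem_upperSlopes_of_ball_subset hgp0 hr hball u⟩

lemma dirDeriv_le_mul_norm (hg0 : ∀ z, 0 ≤ g z) (hgp0 : g p = 0) {r : ℝ} (hr : 0 < r)
    (hball : Metric.ball p r ⊆ {x | g x < 1}) (u : H) : dirDeriv g p u ≤ 2 / r * ‖u‖ :=
  csInf_le (upperSlopes_bddBelow hg0 u) (mem_upperSlopes_of_ball_subset hgp0 hr hball u)

lemma EConvexOn.dirDeriv_add_le (hconv : EConvexOn g) (hg0 : ∀ z, 0 ≤ g z) (hgp0 : g p = 0)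
    {r : ℝ} (hr : 0 < r) (hball : Metric.ball p r ⊆ {x | g x < 1}) (u₁ u₂ : H) :
    dirDeriv g p (u₁ + u₂) ≤ dirDeriv g p u₁ + dirDeriv g p u₂ := by
  have hne := upperSlopes_nonempty hgp0 hr hball
  calc dirDeriv g p (u₁ + u₂) ≤ sInf (upperSlopes g p u₁ + upperSlopes g p u₂) :=
        csInf_le_csInf (upperSlopes_bddBelow hg0 _) ((hne u₁).add (hne u₂))
          (hconv.upperSlopes_add_subset hgp0 u₁ u₂)
    _ = dirDeriv g p u₁ + dirDeriv g p u₂ :=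
        csInf_add (hne u₁) (upperSlopes_bddBelow hg0 u₁) (hne u₂) (upperSlopes_bddBelow hg0 u₂)

lemma coe_dirDeriv_sub_le (hg0 : ∀ z, 0 ≤ g z) (z : H) :
    (dirDeriv g p (z - p) : EReal) ≤ g z := by
  by_cases htop : g z = ⊤
  · simp [htop]
  have hgz : g z = ((g z).toReal : EReal) :=
    (EReal.coe_toReal htop (ne_bot_of_le_ne_bot EReal.zero_ne_bot (hg0 z))).symm
  have hmem : (g z).toReal ∈ upperSlopes g p (z - p) :=
    ⟨1, one_pos, by rw [one_smul, add_sub_cancel, mul_one, ← hgz]⟩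
  rw [hgz]
  exact_mod_cast csInf_le (upperSlopes_bddBelow hg0 _) hmem

theorem exists_inner_le_of_sublinear [CompleteSpace H] (N : H → ℝ)
    (N_smul : ∀ c : ℝ, 0 < c → ∀ x, N (c • x) = c * N x) (N_add : ∀ x y, N (x + y) ≤ N x + N y)
    {C : ℝ} (hC : ∀ x, N x ≤ C * ‖x‖) (w : H) :
    ∃ y : H, (∀ x, inner ℝ y x ≤ N x) ∧ inner ℝ y w = N w := by
  have hN0 : N 0 = 0 := by
    have h := N_smul 2 two_pos 0
    rw [smul_zero] at h
    linarith
  have hN_span : ∀ c : ℝ, c * N w ≤ N (c • w) := by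
    intro c
    rcases lt_trichotomy c 0 with hc | rfl | hc
    · have h := N_add w (-w)
      rw [add_neg_cancel, hN0] at h
      rw [show c • w = (-c) • -w by simp, N_smul _ (neg_pos.2 hc)]
      nlinarith
    · simp [hN0]
    · rw [N_smul c hc]
  let ℓ₀ := LinearPMap.mkSpanSingleton' (σ := RingHom.id ℝ) w (N w) fun c hc => by
    rcases smul_eq_zero.1 hc with rfl | rfl
    · simp
    · simp [hN0]
  obtain ⟨ℓ, hℓ_ext, hℓN⟩ := exists_extension_of_le_sublinear ℓ₀ N N_smul N_add <| by
    rintro ⟨v, hv⟩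
    obtain ⟨c, rfl⟩ := Submodule.mem_span_singleton.1 hv
    rw [LinearPMap.mkSpanSingleton'_apply]
    exact hN_span c
  have hℓ_bound : ∀ x, ‖ℓ x‖ ≤ C * ‖x‖ := fun x => by
    have h := (hℓN (-x)).trans (hC (-x))
    rw [map_neg, norm_neg] at h
    exact abs_le.2 ⟨by linarith, (hℓN x).trans (hC x)⟩
  refine ⟨(InnerProductSpace.toDual ℝ H).symm (ℓ.mkContinuous C hℓ_bound), fun x => ?_, ?_⟩
  · rw [InnerProductSpace.toDual_symm_apply]
    exact hℓN x
  · rw [InnerProductSpace.toDual_symm_apply, LinearMap.mkContinuous_apply]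
    exact (hℓ_ext ⟨w, Submodule.mem_span_singleton_self w⟩).trans
      (LinearPMap.mkSpanSingleton'_apply_self _ _ _ _)

/-- If `0` is the only subgradient at `p`, the directional derivative vanishes in every
direction, by the Hahn–Banach argument behind the max formula `g'(p; w) = max ⟪∂g(p), w⟫`. -/
theorem EConvexOn.exists_lt_mul_of_subdiff_eq_zero [CompleteSpace H] (hconv : EConvexOn g)
    (hgp : subdiff g p = {0}) (hgp0 : g p = 0) (hgc : ContinuousAt g p) (w : H) {a : ℝ}
    (ha : 0 < a) : ∃ t > 0, g (p + t • w) < ((a * t : ℝ) : EReal) := by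
  have hg0 := nonneg_of_zero_mem_subdiff (hgp ▸ rfl) hgp0
  obtain ⟨r, hr, hball⟩ := Metric.mem_nhds_iff.1
    (hgc.preimage_mem_nhds (Iio_mem_nhds (by simp [hgp0] : g p < 1)))
  obtain ⟨y, hyN, hyw⟩ := exists_inner_le_of_sublinear (dirDeriv g p)
    (fun c hc => dirDeriv_smul hc) (hconv.dirDeriv_add_le hg0 hgp0 hr hball)
    (dirDeriv_le_mul_norm hg0 hgp0 hr hball) w
  have hy : y ∈ subdiff g p := fun z => by
    rw [hgp0, zero_add]
    exact (EReal.coe_le_coe_iff.2 (hyN (z - p))).trans (coe_dirDeriv_sub_le hg0 z)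
  rw [hgp, Set.mem_singleton_iff] at hy
  have hw : dirDeriv g p w < a := by rwa [← hyw, hy, inner_zero_left]
  obtain ⟨b, ⟨t, ht, hgt⟩, hba⟩ :=
    exists_lt_of_csInf_lt (upperSlopes_nonempty hgp0 hr hball w) hw
  exact ⟨t, ht, hgt.trans_lt (by exact_mod_cast mul_lt_mul_of_pos_right hba ht)⟩

/-- The subgradient inequality along `v`, then convexity on the segment from `p + τ • w` to
`p + s⁻¹ • (x - p + t • (v - w))`, `t = (1 - s) * τ`, an endpoint that stays near `p` when `x` is
near `p` and `v` near `w`. -/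
lemma EConvexOn.coe_mul_inner_le_of_mem_subdiff (hconv : EConvexOn g) (hg0 : ∀ z, 0 ≤ g z)
    {x y : H} (hy : y ∈ subdiff g x) {s : ℝ} (τ : ℝ) (hs0 : 0 < s) (hs1 : s ≤ 1) (v w : H) :
    (((1 - s) * τ * inner ℝ y v : ℝ) : EReal) ≤ ((1 - s : ℝ) : EReal) * g (p + τ • w)
      + (s : EReal) * g (p + s⁻¹ • (x - p + ((1 - s) * τ) • (v - w))) := by
  have hcomb : x + ((1 - s) * τ) • v
      = (1 - s) • (p + τ • w) + s • (p + s⁻¹ • (x - p + ((1 - s) * τ) • (v - w))) := by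
    rw [smul_add s p, smul_smul, mul_inv_cancel₀ hs0.ne', one_smul]
    module
  calc (((1 - s) * τ * inner ℝ y v : ℝ) : EReal)
      ≤ g x + (inner ℝ y (x + ((1 - s) * τ) • v - x) : EReal) := by
        rw [add_sub_cancel_left, inner_smul_right]; exact le_add_of_nonneg_left (hg0 x)
    _ ≤ g (x + ((1 - s) * τ) • v) := hy _
    _ ≤ _ := by
        rw [hcomb]
        simpa only [sub_sub_cancel] using hconv _ _ (1 - s) (by linarith) (by linarith)

/-- Upper semicontinuity of `∂g` at a point where `∂g(p) = {0}`, uniformly for directions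
near `w`. -/
theorem EConvexOn.exists_inner_lt_of_subdiff_eq_zero [CompleteSpace H] (hconv : EConvexOn g)
    (hgp : subdiff g p = {0}) (hgp0 : g p = 0) (hgc : ContinuousAt g p) (w : H) {η : ℝ}
    (hη : 0 < η) : ∃ δ > 0, ∀ x v y : H, ‖x - p‖ < δ → ‖v - w‖ < δ → y ∈ subdiff g x →
      inner ℝ y v < η := by
  have hg0 := nonneg_of_zero_mem_subdiff (hgp ▸ rfl) hgp0
  obtain ⟨r, hr, hball⟩ := Metric.mem_nhds_iff.1
    (hgc.preimage_mem_nhds (Iio_mem_nhds (by simp [hgp0] : g p < 1)))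
  obtain ⟨τ, hτ, hgτ⟩ :=
    hconv.exists_lt_mul_of_subdiff_eq_zero hgp hgp0 hgc w (by positivity : 0 < η / 4)
  set s := min (1 / 2) (η * τ / 4)
  have hs0 : 0 < s := lt_min (by norm_num) (by positivity)
  have hs1 : s ≤ 1 / 2 := min_le_left _ _
  have hs2 : s ≤ η * τ / 4 := min_le_right _ _
  refine ⟨s * r / (1 + τ), by positivity, fun x v y hx hv hy => ?_⟩
  set t := (1 - s) * τ with ht_def
  have ht0 : 0 < t := by nlinarith
  set z := p + s⁻¹ • (x - p + t • (v - w))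
  have hz : z ∈ Metric.ball p r := by
    rw [mem_ball_iff_norm, add_sub_cancel_left, norm_smul, Real.norm_of_nonneg (by positivity),
      inv_mul_lt_iff₀ hs0]
    calc ‖x - p + t • (v - w)‖ ≤ ‖x - p‖ + t * ‖v - w‖ := by
          simpa [norm_smul, Real.norm_of_nonneg ht0.le] using norm_add_le (x - p) (t • (v - w))
      _ < s * r / (1 + τ) + τ * (s * r / (1 + τ)) :=
          add_lt_add_of_lt_of_le hx (mul_le_mul (by nlinarith) hv.le (norm_nonneg _) hτ.le)
      _ = s * r := by field_simp
  have h1s : 0 ≤ 1 - s := by linarith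
  have hineq : ((t * inner ℝ y v : ℝ) : EReal) ≤ (((1 - s) * (η / 4 * τ) + s * 1 : ℝ) : EReal) :=
    calc ((t * inner ℝ y v : ℝ) : EReal)
        ≤ ((1 - s : ℝ) : EReal) * g (p + τ • w) + (s : EReal) * g z :=
          hconv.coe_mul_inner_le_of_mem_subdiff hg0 hy τ hs0 (by linarith) v w
      _ ≤ ((1 - s : ℝ) : EReal) * ((η / 4 * τ : ℝ) : EReal) + (s : EReal) * ((1 : ℝ) : EReal) := by
          gcongr
          exact (hball hz).le
      _ = _ := by rw [← EReal.coe_mul, ← EReal.coe_mul, ← EReal.coe_add]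
  have : t * inner ℝ y v < t * η := by nlinarith [EReal.coe_le_coe_iff.1 hineq]
  exact lt_of_mul_lt_mul_left this ht0.le

end Subdifferential

theorem alexandrov_part_two_general
    {H : Type*} [NormedAddCommGroup H] [InnerProductSpace ℝ H]
    [CompleteSpace H]
    (f g : H → EReal) (hg : ProperLscConvex g)
    (p : H) (u₀ : H)
    (hfp : subdiff f p = {u₀}) (hgp : subdiff g p = {(0 : H)})
    (hne : u₀ ≠ 0)
    (hfp0 : f p = 0) (hgp0 : g p = 0)
    (hgc : ContinuousAt g p) :
    ∃ ε : ℝ, 0 < ε ∧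
      ∀ x ∈ {x : H | ∃ y : H, subdiff g x = {y} ∧ ∃ h : H, g h < f h ∧ y ∈ subdiff f h},
        ε ≤ ‖x - p‖ := by
  obtain ⟨-, -, -, hgconv⟩ := hg
  have hg0 := nonneg_of_zero_mem_subdiff (hgp ▸ rfl) hgp0
  obtain ⟨z₀, hz₀⟩ := exists_lt_of_zero_notMem_subdiff (f := f) (p := p) <| by
    rw [hfp, Set.mem_singleton_iff]; exact hne.symm
  rw [hfp0] at hz₀
  obtain ⟨c, hfc, hc⟩ := EReal.lt_iff_exists_real_btwn.1 hz₀
  obtain ⟨δ, hδ, hnear⟩ := hgconv.exists_inner_lt_of_subdiff_eq_zero hgp hgp0 hgc (p - z₀)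
    (neg_pos.2 (EReal.coe_lt_coe_iff.1 hc))
  refine ⟨δ, hδ, ?_⟩
  rintro x ⟨y, hgx, h, hgfh, hyf⟩
  by_contra! hx
  have hy : y ∈ subdiff g x := hgx ▸ rfl
  have hlarge : inner ℝ y (x - z₀) < -c :=
    hnear x (x - z₀) y hx (by rwa [sub_sub_sub_cancel_right]) hy
  have hsmall : ((inner ℝ y (z₀ - x) : ℝ) : EReal) < c :=
    (le_add_of_nonneg_left (hg0 x)).trans_lt
      ((add_inner_lt_of_mem_subdiff hy hyf hgfh z₀).trans hfc)
  rw [← neg_sub, inner_neg_right] at hsmall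
  linarith [EReal.coe_lt_coe_iff.1 hsmall]

theorem alexandrov_part_two
    {H : Type*} [NormedAddCommGroup H] [InnerProductSpace ℝ H]
    [CompleteSpace H] [SecondCountableTopology H]
    (f g : H → EReal) (hf : ProperLscConvex f) (hg : ProperLscConvex g)
    (p : H) (u₀ : H)
    (hfp : subdiff f p = {u₀}) (hgp : subdiff g p = {(0 : H)})
    (hne : u₀ ≠ 0)
    (hfp0 : f p = 0) (hgp0 : g p = 0)
    (hfc : ContinuousAt f p) (hgc : ContinuousAt g p) :
    ∃ ε : ℝ, 0 < ε ∧
      ∀ x ∈ {x : H | ∃ y : H, subdiff g x = {y} ∧ ∃ h : H, g h < f h ∧ y ∈ subdiff f h},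
        ε ≤ ‖x - p‖ :=
  alexandrov_part_two_general f g hg p u₀ hfp hgp hne hfp0 hgp0 hgc
end
end

section
/- Let H be a real separable Hilbert space and let f, g : H → (-∞,+∞] be proper lower semicontinuous convex functions. Suppose p ∈ H is a point at which both f and g are finite and continuous, both ∂f(p) and ∂g(p) are singletons {∇f(p)} and {∇g(p)}, and ∇f(p) ≠ ∇g(p) = 0 while f(p) = g(p) = 0. Then there exists an open neighborhood U of p such that the set {x ∈ U : f(x) = g(x)} is contained in a Lipschitz hypersurface. -/
/-!
Near `p` both functions are finite and bounded, hence Lipschitz. Because `∂f(p) = {u₀}`, the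
one-sided directional derivative of `f` at `p` is `d ↦ ⟪u₀, d⟫`: it is the infimum of convex
difference quotients, a sublinear functional, and Hahn–Banach produces a subgradient attaining it
in any prescribed direction. So along `e = u₀ / ‖u₀‖` the function `f` rises with slope close to
`‖u₀‖` while `g` is nearly flat, and monotonicity of difference quotients together with the
Lipschitz bounds propagates this to all points close to `p`. If `f = g` at `x` and `y`, comparing
the increments of `f` and `g` between them gives `⟪e, x - y⟫ ≤ K ‖(x - y) - ⟪e, x - y⟫ e‖`; so the
coincidence set is the graph of a Lipschitz function over `e⊥`, whose McShane extension gives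
the hypersurface.
-/

open MeasureTheory Filter Topology

noncomputable section

open Metric Set
open scoped RealInnerProductSpace NNReal

section RadialSlope

variable {E : Type*} [NormedAddCommGroup E] [NormedSpace ℝ E] {F : E → ℝ} {U : Set E}
  {p d : E}

def radialSlope (F : E → ℝ) (p d : E) (s : ℝ) : ℝ := (F (p + s • d) - F p) / s

lemma ConvexOn.comp_line (hF : ConvexOn ℝ U F) (p d : E) :
    ConvexOn ℝ {t : ℝ | p + t • d ∈ U} (fun t => F (p + t • d)) := by
  convert hF.comp_affineMap (AffineMap.lineMap p (p + d)) using 1 <;>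
    ext <;> simp [AffineMap.lineMap_apply, add_comm]

lemma ConvexOn.radialSlope_mono (hF : ConvexOn ℝ U F) (hp : p ∈ U) {s t : ℝ}
    (hs : p + s • d ∈ U) (ht : p + t • d ∈ U) (hs0 : s ≠ 0) (ht0 : t ≠ 0) (hst : s ≤ t) :
    radialSlope F p d s ≤ radialSlope F p d t := by
  have := (hF.comp_line p d).secant_mono (a := 0) (by simpa using hp) hs ht hs0 ht0 hst
  simpa [radialSlope] using this

lemma radialSlope_smul (F : E → ℝ) (p d : E) {c : ℝ} (hc : c ≠ 0) (s : ℝ) :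
    radialSlope F p (c • d) s = c * radialSlope F p d (s * c) := by
  rcases eq_or_ne s 0 with rfl | hs
  · simp [radialSlope]
  simp only [radialSlope, smul_smul]
  field_simp

end RadialSlope

lemma exists_continuousLinearMap_le_sublinear_eq {E : Type*} [NormedAddCommGroup E]
    [NormedSpace ℝ E] (N : E → ℝ) (hN_hom : ∀ c : ℝ, 0 < c → ∀ x, N (c • x) = c * N x)
    (hN_add : ∀ x y, N (x + y) ≤ N x + N y) {C : ℝ} (hC : ∀ x, N x ≤ C * ‖x‖) (d : E) :
    ∃ ℓ : E →L[ℝ] ℝ, (∀ x, ℓ x ≤ N x) ∧ ℓ d = N d := by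
  have hN0 : N 0 = 0 := by
    have := hN_hom 2 two_pos 0
    rw [smul_zero] at this
    linarith
  have hker : ∀ c : ℝ, c • d = 0 → c • N d = 0 := by
    intro c hc
    rcases smul_eq_zero.1 hc with rfl | rfl
    · exact zero_smul _ _
    · rw [hN0, smul_zero]
  set ℓ₀ : E →ₗ.[ℝ] ℝ := LinearPMap.mkSpanSingleton' d (N d) hker
  have hℓ₀ : ∀ x : ℓ₀.domain, ℓ₀ x ≤ N x := by
    rintro ⟨x, hx⟩
    obtain ⟨c, rfl⟩ := Submodule.mem_span_singleton.1 hx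
    rw [LinearPMap.mkSpanSingleton'_apply]
    change c * N d ≤ N (c • d)
    rcases lt_trichotomy c 0 with hc | rfl | hc
    · have hneg : -N d ≤ N (-d) := by
        have := hN_add d (-d)
        rw [add_neg_cancel, hN0] at this
        linarith
      have : c • d = (-c) • (-d) := by rw [neg_smul_neg]
      rw [this, hN_hom _ (neg_pos.2 hc)]
      nlinarith
    · simp [hN0]
    · rw [hN_hom c hc]
  obtain ⟨ℓ, hℓ_ext, hℓ_le⟩ := exists_extension_of_le_sublinear ℓ₀ N hN_hom hN_add hℓ₀
  have hbound : ∀ x, ‖ℓ x‖ ≤ C * ‖x‖ := fun x => by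
    rw [Real.norm_eq_abs, abs_le]
    refine ⟨?_, (hℓ_le x).trans (hC x)⟩
    have := (hℓ_le (-x)).trans (hC (-x))
    rw [map_neg, norm_neg] at this
    linarith
  refine ⟨ℓ.mkContinuous C hbound, hℓ_le, ?_⟩
  have hd : d ∈ ℓ₀.domain := Submodule.mem_span_singleton_self d
  simpa using (hℓ_ext ⟨d, hd⟩).trans (LinearPMap.mkSpanSingleton'_apply_self d (N d) hker hd)

section RadialDeriv

variable {E : Type*} [NormedAddCommGroup E] [NormedSpace ℝ E] {F : E → ℝ} {p d : E} {r : ℝ}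

/-- For convex `F` the quotients decrease as `s ↓ 0`, so this is the one-sided directional
derivative of `F` at `p` in direction `d`. -/
def radialDeriv (F : E → ℝ) (p : E) (r : ℝ) (d : E) : ℝ :=
  sInf (radialSlope F p d '' {s | 0 < s ∧ p + s • d ∈ ball p r})

lemma exists_pos_add_smul_mem_ball (hr : 0 < r) (p d : E) :
    ∃ s : ℝ, 0 < s ∧ p + s • d ∈ ball p r := by
  have hcont : Continuous fun s : ℝ => p + s • d := by fun_prop
  have hball : ball p r ∈ 𝓝 (p + (0 : ℝ) • d) := by simpa using ball_mem_nhds p hr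
  have h : ∀ᶠ s in 𝓝[>] (0 : ℝ), s ∈ Ioi 0 ∧ p + s • d ∈ ball p r :=
    eventually_mem_nhdsWithin.and
      (eventually_nhdsWithin_of_eventually_nhds (hcont.continuousAt hball))
  exact h.exists

lemma add_smul_mem_ball_of_le {s t : ℝ} (hs : 0 ≤ s) (hst : s ≤ t)
    (ht : p + t • d ∈ ball p r) : p + s • d ∈ ball p r := by
  rw [mem_ball_iff_norm, add_sub_cancel_left, norm_smul, Real.norm_of_nonneg hs] at *
  rw [Real.norm_of_nonneg (hs.trans hst)] at ht
  nlinarith [norm_nonneg d]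

lemma le_radialDeriv (hr : 0 < r) {a : ℝ}
    (h : ∀ s, 0 < s → p + s • d ∈ ball p r → a ≤ radialSlope F p d s) :
    a ≤ radialDeriv F p r d := by
  obtain ⟨s, hs⟩ := exists_pos_add_smul_mem_ball hr p d
  exact le_csInf ⟨_, s, hs, rfl⟩ (forall_mem_image.2 fun s hs => h s hs.1 hs.2)

lemma radialDeriv_smul {c : ℝ} (hc : 0 < c) (d : E) :
    radialDeriv F p r (c • d) = c * radialDeriv F p r d := by
  rw [radialDeriv, radialDeriv, ← smul_eq_mul, ← Real.sInf_smul_of_nonneg hc.le]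
  congr 1
  ext y
  constructor
  · rintro ⟨s, ⟨hs, hsd⟩, rfl⟩
    exact ⟨_, ⟨s * c, ⟨by positivity, by rwa [mul_smul]⟩, rfl⟩,
      (radialSlope_smul F p d hc.ne' s).symm⟩
  · rintro ⟨_, ⟨s, ⟨hs, hsd⟩, rfl⟩, rfl⟩
    refine ⟨s / c, ⟨div_pos hs hc, by rwa [smul_smul, div_mul_cancel₀ _ hc.ne']⟩, ?_⟩
    rw [radialSlope_smul F p d hc.ne', div_mul_cancel₀ _ hc.ne']
    rfl

variable (hF : ConvexOn ℝ (ball p r) F) (hr : 0 < r)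
include hF hr

lemma ConvexOn.radialDeriv_le {s : ℝ} (hs : 0 < s) (hsd : p + s • d ∈ ball p r) :
    radialDeriv F p r d ≤ radialSlope F p d s := by
  obtain ⟨t, ht, htd⟩ := exists_pos_add_smul_mem_ball hr p (-d)
  have hmono : ∀ s, 0 < s → p + s • d ∈ ball p r →
      radialSlope F p d (-t) ≤ radialSlope F p d s := fun s hs hsd =>
    hF.radialSlope_mono (mem_ball_self hr) (by rwa [neg_smul, ← smul_neg]) hsd
      (by linarith) hs.ne' (by linarith)
  exact csInf_le ⟨_, forall_mem_image.2 fun s hs => hmono s hs.1 hs.2⟩ ⟨s, ⟨hs, hsd⟩, rfl⟩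

lemma ConvexOn.radialDeriv_add_le (w₁ w₂ : E) :
    radialDeriv F p r (w₁ + w₂) ≤ radialDeriv F p r w₁ + radialDeriv F p r w₂ := by
  suffices key : ∀ σ₁ σ₂ : ℝ, 0 < σ₁ → p + σ₁ • w₁ ∈ ball p r → 0 < σ₂ →
      p + σ₂ • w₂ ∈ ball p r →
      radialDeriv F p r (w₁ + w₂) ≤ radialSlope F p w₁ σ₁ + radialSlope F p w₂ σ₂ by
    have : radialDeriv F p r (w₁ + w₂) - radialDeriv F p r w₂ ≤ radialDeriv F p r w₁ :=
      le_radialDeriv hr fun σ₁ hσ₁ hm₁ => sub_le_comm.1 <|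
        le_radialDeriv hr fun σ₂ hσ₂ hm₂ => by linarith [key σ₁ σ₂ hσ₁ hm₁ hσ₂ hm₂]
    linarith
  intro σ₁ σ₂ hσ₁ hm₁ hσ₂ hm₂
  obtain ⟨s, hs, h2s₁, h2s₂⟩ : ∃ s : ℝ, 0 < s ∧ 2 * s ≤ σ₁ ∧ 2 * s ≤ σ₂ :=
    ⟨min σ₁ σ₂ / 2, by positivity, by linarith [min_le_left σ₁ σ₂],
      by linarith [min_le_right σ₁ σ₂]⟩
  have ha₁ := add_smul_mem_ball_of_le (by positivity) h2s₁ hm₁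
  have ha₂ := add_smul_mem_ball_of_le (by positivity) h2s₂ hm₂
  have hmid : (1 / 2 : ℝ) • (p + (2 * s) • w₁) + (1 / 2 : ℝ) • (p + (2 * s) • w₂) =
      p + s • (w₁ + w₂) := by
    match_scalars <;> ring
  have hhalf : (0 : ℝ) ≤ 1 / 2 := by norm_num
  have hconv := hF.2 ha₁ ha₂ hhalf hhalf (by norm_num)
  rw [hmid, smul_eq_mul, smul_eq_mul] at hconv
  have hsplit : radialSlope F p (w₁ + w₂) s ≤
      radialSlope F p w₁ (2 * s) + radialSlope F p w₂ (2 * s) := by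
    simp only [radialSlope]
    rw [← add_div, div_le_div_iff₀ hs (by positivity)]
    nlinarith
  have hmem : p + s • (w₁ + w₂) ∈ ball p r := hmid ▸ hF.1 ha₁ ha₂ hhalf hhalf (by norm_num)
  calc radialDeriv F p r (w₁ + w₂) ≤ radialSlope F p (w₁ + w₂) s := hF.radialDeriv_le hr hs hmem
    _ ≤ radialSlope F p w₁ (2 * s) + radialSlope F p w₂ (2 * s) := hsplit
    _ ≤ radialSlope F p w₁ σ₁ + radialSlope F p w₂ σ₂ := by
      gcongr
      · exact hF.radialSlope_mono (mem_ball_self hr) ha₁ hm₁ (by positivity) hσ₁.ne' h2s₁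
      · exact hF.radialSlope_mono (mem_ball_self hr) ha₂ hm₂ (by positivity) hσ₂.ne' h2s₂

lemma ConvexOn.radialDeriv_le_mul_norm {M : ℝ} (hM : ∀ x ∈ ball p r, F x ≤ M) (d : E) :
    radialDeriv F p r d ≤ 2 * (M - F p) / r * ‖d‖ := by
  rcases eq_or_ne d 0 with rfl | hd
  · simpa [radialSlope] using hF.radialDeriv_le (d := 0) hr one_pos (by simpa using hr)
  have hd' : 0 < ‖d‖ := norm_pos_iff.2 hd
  set s := r / (2 * ‖d‖)
  have hs : 0 < s := by positivity
  have hsd : p + s • d ∈ ball p r := by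
    have : s * ‖d‖ = r / 2 := by simp only [s]; field_simp
    rw [mem_ball_iff_norm, add_sub_cancel_left, norm_smul, Real.norm_of_nonneg hs.le, this]
    linarith
  calc radialDeriv F p r d ≤ radialSlope F p d s := hF.radialDeriv_le hr hs hsd
    _ ≤ (M - F p) / s := by
      unfold radialSlope
      gcongr
      exact hM _ hsd
    _ = 2 * (M - F p) / r * ‖d‖ := by
      simp only [s]
      field_simp

lemma ConvexOn.exists_subgradient_eq_radialDeriv {M : ℝ} (hM : ∀ x ∈ ball p r, F x ≤ M)
    (d : E) :
    ∃ ℓ : E →L[ℝ] ℝ, (∀ x ∈ ball p r, F p + ℓ (x - p) ≤ F x) ∧ ℓ d = radialDeriv F p r d := by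
  obtain ⟨ℓ, hℓ_le, hℓd⟩ := exists_continuousLinearMap_le_sublinear_eq (radialDeriv F p r)
    (fun _ hc w => radialDeriv_smul hc w) (hF.radialDeriv_add_le hr)
    (hF.radialDeriv_le_mul_norm hr hM) d
  refine ⟨ℓ, fun x hx => ?_, hℓd⟩
  have := (hℓ_le (x - p)).trans (hF.radialDeriv_le hr one_pos (by simpa using hx))
  simp only [radialSlope, one_smul, add_sub_cancel, div_one] at this
  linarith

lemma ConvexOn.eventually_radialSlope_lt {ε : ℝ} (hε : 0 < ε) (d : E) :
    ∀ᶠ s in 𝓝[>] 0, radialSlope F p d s < radialDeriv F p r d + ε := by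
  obtain ⟨s₀, hs₀, hs₀d⟩ := exists_pos_add_smul_mem_ball hr p d
  have hne : (radialSlope F p d '' {s | 0 < s ∧ p + s • d ∈ ball p r}).Nonempty :=
    ⟨_, s₀, ⟨hs₀, hs₀d⟩, rfl⟩
  obtain ⟨_, ⟨t, ⟨ht, htd⟩, rfl⟩, hlt⟩ :=
    exists_lt_of_csInf_lt hne (lt_add_of_pos_right (radialDeriv F p r d) hε)
  filter_upwards [Ioc_mem_nhdsGT ht] with s hs
  exact (hF.radialSlope_mono (mem_ball_self hr) (add_smul_mem_ball_of_le hs.1.le hs.2 htd) htd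
    hs.1.ne' ht.ne' hs.2).trans_lt hlt

end RadialDeriv

section SlopeTransfer

variable {E : Type*} [NormedAddCommGroup E] [NormedSpace ℝ E] {F : E → ℝ} {p v y : E} {R : ℝ}
  {L : ℝ≥0}

lemma add_smul_mem_ball_of_norm_le_one (hv : ‖v‖ ≤ 1) {c : ℝ} (h : ‖y - p‖ + |c| < R) :
    y + c • v ∈ ball p R := by
  rw [mem_ball_iff_norm]
  calc ‖y + c • v - p‖ = ‖(y - p) + c • v‖ := by rw [add_sub_right_comm]
    _ ≤ ‖y - p‖ + |c| * ‖v‖ := by rw [← Real.norm_eq_abs, ← norm_smul]; exact norm_add_le _ _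
    _ ≤ ‖y - p‖ + |c| := by gcongr; exact mul_le_of_le_one_right (abs_nonneg c) hv
    _ < R := h

lemma ConvexOn.sub_le_mul_radialSlope_add (hF : ConvexOn ℝ (ball p R) F)
    (hL : LipschitzOnWith L F (ball p R)) (hv : ‖v‖ ≤ 1) {s t : ℝ} (hs : 0 < s) (ht : 0 < t)
    (hys : ‖y - p‖ + s < R) (hyt : ‖y - p‖ + t < R) :
    F y - F (y - t • v) ≤ t * (radialSlope F p v s + 2 * L * ‖y - p‖ / s) := by
  have hmem : ∀ {z : E} {c : ℝ}, ‖z - p‖ + |c| < R → z + c • v ∈ ball p R :=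
    add_smul_mem_ball_of_norm_le_one hv
  have hp : p ∈ ball p R := mem_ball_self (by linarith [norm_nonneg (y - p)])
  have hy : y ∈ ball p R := mem_ball_iff_norm.2 (by linarith)
  have hy_t : y + (-t) • v ∈ ball p R := hmem (by rwa [abs_neg, abs_of_pos ht])
  have hy_s : y + s • v ∈ ball p R := hmem (by rwa [abs_of_pos hs])
  have hp_s : p + s • v ∈ ball p R := hmem (by
    rw [sub_self, norm_zero, zero_add, abs_of_pos hs]
    linarith [norm_nonneg (y - p)])
  have hmono := hF.radialSlope_mono hy hy_t hy_s (by linarith) hs.ne' (by linarith)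
  have hL₁ := hL.le_add_mul hy_s hp_s
  have hL₂ := hL.le_add_mul hp hy
  rw [dist_eq_norm, add_sub_add_right_eq_sub] at hL₁
  rw [dist_eq_norm, norm_sub_rev] at hL₂
  simp only [radialSlope, neg_smul, ← sub_eq_add_neg] at hmono ⊢
  rw [div_neg, ← neg_div, neg_sub] at hmono
  have hslope : (F (y + s • v) - F y) / s ≤ (F (p + s • v) - F p) / s + 2 * L * ‖y - p‖ / s := by
    rw [← add_div]
    gcongr
    linarith
  have := hmono.trans hslope
  rw [div_le_iff₀ ht] at this
  linarith

end SlopeTransfer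

section ERealConvex

variable {E : Type*} [NormedAddCommGroup E] [InnerProductSpace ℝ E] {φ : E → EReal}

lemma EConvexOn.toReal_le (hφ : EConvexOn φ) {x y : E} {a b t : ℝ} (hx : φ x = a)
    (hy : φ y = b) (ht₀ : 0 ≤ t) (ht₁ : t ≤ 1) (hxy : φ (t • x + (1 - t) • y) ≠ ⊥) :
    (φ (t • x + (1 - t) • y)).toReal ≤ t * a + (1 - t) * b := by
  have h := hφ x y t ht₀ ht₁
  rw [hx, hy, ← EReal.coe_mul, ← EReal.coe_mul, ← EReal.coe_add] at h
  have := EReal.toReal_le_toReal h hxy (EReal.coe_ne_top _)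
  rwa [EReal.toReal_coe] at this

lemma EConvexOn.convexOn_toReal_s6 (hφ : EConvexOn φ) {U : Set E} (hU : Convex ℝ U)
    (hfin : ∀ x ∈ U, φ x = (φ x).toReal) : ConvexOn ℝ U fun x => (φ x).toReal := by
  refine ⟨hU, fun x hx y hy a b ha hb hab => ?_⟩
  obtain rfl : b = 1 - a := by linarith
  have hmem := hU hx hy ha hb hab
  simpa using hφ.toReal_le (hfin x hx) (hfin y hy) ha (by linarith)
    (hfin _ hmem ▸ EReal.coe_ne_bot _)

lemma EConvexOn.mem_subdiff_of_ball (hφ : EConvexOn φ) (hbot : ∀ x, φ x ≠ ⊥) {p u : E}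
    {r : ℝ} (hr : 0 < r) (hfin : ∀ x ∈ ball p r, φ x = (φ x).toReal)
    (hu : ∀ x ∈ ball p r, (φ p).toReal + ⟪u, x - p⟫ ≤ (φ x).toReal) : u ∈ subdiff φ p := by
  intro z
  rcases eq_or_ne (φ z) ⊤ with hz | hz
  · rw [hz]
    exact le_top
  obtain ⟨s, hs, hsz⟩ := exists_pos_add_smul_mem_ball hr p (z - p)
  set t := min s 1
  have ht : 0 < t := lt_min hs one_pos
  have htz : t • z + (1 - t) • p ∈ ball p r := by
    convert add_smul_mem_ball_of_le ht.le (min_le_left s 1) hsz using 1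
    module
  have hconv := hφ.toReal_le (EReal.coe_toReal hz (hbot z)).symm (hfin p (mem_ball_self hr))
    ht.le (min_le_right s 1) (hbot _)
  have hloc := hu _ htz
  have hdiff : t • z + (1 - t) • p - p = t • (z - p) := by module
  rw [hdiff, real_inner_smul_right] at hloc
  have key : ⟪u, z - p⟫ ≤ (φ z).toReal - (φ p).toReal := by nlinarith
  rw [hfin p (mem_ball_self hr), ← EReal.coe_toReal hz (hbot z), ← EReal.coe_add,
    EReal.coe_le_coe_iff]
  linarith

end ERealConvex

lemma exists_ball_abs_toReal_lt {X : Type*} [PseudoMetricSpace X] {φ : X → EReal} {p : X}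
    (hc : ContinuousAt φ p) (hp : φ p = 0) :
    ∃ r > 0, ∀ x ∈ ball p r, φ x = (φ x).toReal ∧ |(φ x).toReal| < 1 := by
  have hnhds : Ioo (-1 : EReal) 1 ∈ 𝓝 (φ p) := by
    rw [hp]
    exact Ioo_mem_nhds (by norm_num) (by norm_num)
  obtain ⟨r, hr, hball⟩ := Metric.mem_nhds_iff.1 (hc hnhds)
  refine ⟨r, hr, fun x hx => ?_⟩
  obtain ⟨h₁, h₂⟩ := hball hx
  have hcoe := (EReal.coe_toReal (ne_top_of_lt h₂) (ne_bot_of_gt h₁)).symm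
  rw [hcoe, ← EReal.coe_one] at h₂
  rw [hcoe, ← EReal.coe_one, ← EReal.coe_neg] at h₁
  exact ⟨hcoe, abs_lt.2 ⟨EReal.coe_lt_coe_iff.1 h₁, EReal.coe_lt_coe_iff.1 h₂⟩⟩

section Gateaux

variable {E : Type*} [NormedAddCommGroup E] [InnerProductSpace ℝ E] [CompleteSpace E]
  {F : E → ℝ} {p u : E} {r M : ℝ}

lemma ConvexOn.eventually_radialSlope_lt_of_subgradient_unique
    (hF : ConvexOn ℝ (ball p r) F) (hr : 0 < r) (hM : ∀ x ∈ ball p r, F x ≤ M)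
    (hu : ∀ v, (∀ x ∈ ball p r, F p + ⟪v, x - p⟫ ≤ F x) → v = u) (d : E) {ε : ℝ}
    (hε : 0 < ε) : ∀ᶠ s in 𝓝[>] 0, radialSlope F p d s < ⟪u, d⟫ + ε := by
  obtain ⟨ℓ, hℓ_sub, hℓd⟩ := hF.exists_subgradient_eq_radialDeriv hr hM d
  have hinner : ∀ x, ⟪(InnerProductSpace.toDual ℝ E).symm ℓ, x⟫ = ℓ x := fun _ =>
    InnerProductSpace.toDual_symm_apply
  have hv := hu ((InnerProductSpace.toDual ℝ E).symm ℓ) fun x hx => by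
    rw [hinner]
    exact hℓ_sub x hx
  rw [← hv, hinner, hℓd]
  exact hF.eventually_radialSlope_lt hr hε d

lemma EConvexOn.exists_ball_lipschitzOnWith_radialSlope_lt {φ : E → EReal} (hφ : EConvexOn φ)
    (hbot : ∀ x, φ x ≠ ⊥) (hc : ContinuousAt φ p) (hp : φ p = 0) (hsub : subdiff φ p = {u}) :
    ∃ R > 0, ∃ L : ℝ≥0, ConvexOn ℝ (ball p R) (fun x => (φ x).toReal) ∧
      LipschitzOnWith L (fun x => (φ x).toReal) (ball p R) ∧
      ∀ d : E, ∀ ε > 0, ∀ᶠ s in 𝓝[>] 0, radialSlope (fun x => (φ x).toReal) p d s < ⟪u, d⟫ + ε := by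
  obtain ⟨r, hr, hfin⟩ := exists_ball_abs_toReal_lt hc hp
  have hF := hφ.convexOn_toReal_s6 (convex_ball p r) fun x hx => (hfin x hx).1
  have hLip := hF.lipschitzOnWith_of_abs_le (half_pos hr) fun x hx => (hfin x hx).2.le
  rw [sub_half] at hLip
  refine ⟨r / 2, half_pos hr, _, hF.subset (ball_subset_ball (half_le_self hr.le))
    (convex_ball _ _), hLip, fun d ε hε => ?_⟩
  refine hF.eventually_radialSlope_lt_of_subgradient_unique hr
    (fun x hx => (le_abs_self _).trans (hfin x hx).2.le) (fun v hv => ?_) d hε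
  simpa [hsub] using hφ.mem_subdiff_of_ball hbot hr (fun x hx => (hfin x hx).1) hv

end Gateaux

section Cone

variable {E : Type*} [NormedAddCommGroup E] [InnerProductSpace ℝ E] {F G : E → ℝ}
  {p e x y : E} {R ρ a b : ℝ} {L : ℝ≥0}

lemma real_inner_sub_lt_of_mem_ball (he : ‖e‖ = 1) (hx : x ∈ ball p ρ) (hy : y ∈ ball p ρ) :
    ⟪e, x - y⟫ < 2 * ρ := calc
  ⟪e, x - y⟫ ≤ ‖e‖ * ‖x - y‖ := real_inner_le_norm e (x - y)
  _ = dist x y := by rw [he, one_mul, dist_eq_norm]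
  _ < 2 * ρ := by linarith [dist_triangle_right x y p, mem_ball.1 hx, mem_ball.1 hy]

lemma inner_le_of_eq_of_radialSlope_le (hF : ConvexOn ℝ (ball p R) F)
    (hG : ConvexOn ℝ (ball p R) G) (hFL : LipschitzOnWith L F (ball p R))
    (hGL : LipschitzOnWith L G (ball p R)) (he : ‖e‖ = 1) {sF sG : ℝ} (hsF : 0 < sF)
    (hsG : 0 < sG) (hρF : ρ + sF ≤ R) (hρG : ρ + sG ≤ R) (hρ : 3 * ρ ≤ R)
    (hFs : radialSlope F p (-e) sF + 2 * L * ρ / sF ≤ -a)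
    (hGs : radialSlope G p e sG + 2 * L * ρ / sG ≤ b) (hab : b < a)
    (hx : x ∈ ball p ρ) (hy : y ∈ ball p ρ) (hFGx : F x = G x) (hFGy : F y = G y) :
    ⟪e, x - y⟫ ≤ 2 * L / (a - b) * ‖x - y - ⟪e, x - y⟫ • e‖ := by
  have hab' : 0 < a - b := sub_pos.2 hab
  set t := ⟪e, x - y⟫
  set z := x - y - t • e
  rcases le_or_gt t 0 with ht | ht
  · exact ht.trans (by positivity)
  have hx' : ‖x - p‖ < ρ := mem_ball_iff_norm.1 hx
  have hy' : ‖y - p‖ < ρ := mem_ball_iff_norm.1 hy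
  have ht_lt : t < 2 * ρ := real_inner_sub_lt_of_mem_ball he hx hy
  have hxR : x ∈ ball p R := ball_subset_ball (by linarith [norm_nonneg (x - p)]) hx
  have hyR : y ∈ ball p R := ball_subset_ball (by linarith [norm_nonneg (x - p)]) hy
  have hytR : y + t • e ∈ ball p R :=
    add_smul_mem_ball_of_norm_le_one he.le (by rw [abs_of_pos ht]; linarith)
  have hxtR : x - t • e ∈ ball p R := by
    have := add_smul_mem_ball_of_norm_le_one (p := p) (R := R) (y := x) (c := -t) he.le
      (by rw [abs_neg, abs_of_pos ht]; linarith)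
    rwa [neg_smul, ← sub_eq_add_neg] at this
  -- Compare `F` along `y → y + t • e → x` with `G` along `y → x - t • e → x`: the legs in
  -- direction `e` are controlled by the slopes, the remaining legs are `±z`.
  have hF_rise : t * a ≤ F (y + t • e) - F y := by
    have h := hF.sub_le_mul_radialSlope_add hFL (v := -e) (by rw [norm_neg, he]) hsF ht
      (by linarith) (by linarith)
    have hρ' : 2 * L * ‖y - p‖ / sF ≤ 2 * L * ρ / sF := by gcongr
    rw [smul_neg, sub_neg_eq_add] at h
    nlinarith
  have hG_rise : G x - G (x - t • e) ≤ t * b := by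
    have h := hG.sub_le_mul_radialSlope_add (y := x) hGL he.le hsG ht (by linarith) (by linarith)
    have hρ' : 2 * L * ‖x - p‖ / sG ≤ 2 * L * ρ / sG := by gcongr
    nlinarith
  have hFz : F (y + t • e) ≤ F x + L * ‖z‖ := by
    have h := hFL.le_add_mul hytR hxR
    rwa [dist_eq_norm, ← norm_neg, show -(y + t • e - x) = z by simp only [z]; abel] at h
  have hGz : G (x - t • e) ≤ G y + L * ‖z‖ := by
    have h := hGL.le_add_mul hxtR hyR
    rwa [dist_eq_norm, show x - t • e - y = z by simp only [z]; abel] at h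
  rw [div_mul_eq_mul_div, le_div_iff₀ hab']
  nlinarith

lemma exists_ball_inner_le_of_eq (hR : 0 < R) (hF : ConvexOn ℝ (ball p R) F)
    (hG : ConvexOn ℝ (ball p R) G) (hFL : LipschitzOnWith L F (ball p R))
    (hGL : LipschitzOnWith L G (ball p R)) (he : ‖e‖ = 1)
    (hFs : ∀ ε > 0, ∀ᶠ s in 𝓝[>] 0, radialSlope F p (-e) s < -a + ε)
    (hGs : ∀ ε > 0, ∀ᶠ s in 𝓝[>] 0, radialSlope G p e s < b + ε) (hab : b < a) :
    ∃ ρ > 0, ∃ K : ℝ, ∀ x ∈ ball p ρ, ∀ y ∈ ball p ρ, F x = G x → F y = G y →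
      ⟪e, x - y⟫ ≤ K * ‖x - y - ⟪e, x - y⟫ • e‖ := by
  obtain ⟨δ, hδ, hδab⟩ : ∃ δ : ℝ, 0 < δ ∧ 4 * δ < a - b := ⟨(a - b) / 8, by linarith, by linarith⟩
  obtain ⟨sF, hFsF, hsF, hsF_lt⟩ := ((hFs δ hδ).and (Ioo_mem_nhdsGT (half_pos hR))).exists
  obtain ⟨sG, hGsG, hsG, hsG_lt⟩ := ((hGs δ hδ).and (Ioo_mem_nhdsGT (half_pos hR))).exists
  set ρ := min (R / 3) (δ * min sF sG / (2 * L + 1))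
  have hρ : 0 < ρ := lt_min (by positivity) (div_pos (mul_pos hδ (lt_min hsF hsG)) (by positivity))
  have hρR : ρ ≤ R / 3 := min_le_left _ _
  have hLρ : ∀ s, min sF sG ≤ s → 0 < s → 2 * L * ρ / s ≤ δ := fun s hs hs₀ => by
    have h : ρ * (2 * L + 1) ≤ δ * min sF sG :=
      (le_div_iff₀ (by positivity)).1 (min_le_right _ _)
    rw [div_le_iff₀ hs₀]
    nlinarith [mul_le_mul_of_nonneg_left hs hδ.le]
  refine ⟨ρ, hρ, _, fun x hx y hy hFGx hFGy => inner_le_of_eq_of_radialSlope_le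
    (a := a - 2 * δ) (b := b + 2 * δ) hF hG hFL hGL he hsF hsG (by linarith) (by linarith)
    (by linarith) ?_ ?_ (by linarith) hx hy hFGx hFGy⟩
  · linarith [hLρ sF (min_le_left _ _) hsF]
  · linarith [hLρ sG (min_le_right _ _) hsG]

end Cone

lemma exists_isLipschitzHypersurface_superset_of_inner_le {E : Type*} [NormedAddCommGroup E]
    [InnerProductSpace ℝ E] {A : Set E} {e : E} (he : ‖e‖ = 1) {K : ℝ}
    (hA : ∀ x ∈ A, ∀ y ∈ A, ⟪e, x - y⟫ ≤ K * ‖x - y - ⟪e, x - y⟫ • e‖) :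
    ∃ S, IsLipschitzHypersurface S ∧ A ⊆ S := by
  set π : E → E := fun x => x - ⟪e, x⟫ • e
  have hπ_sub : ∀ x y, π x - π y = x - y - ⟪e, x - y⟫ • e := fun x y => by
    simp only [π, inner_sub_right, sub_smul]
    abel
  have habs : ∀ x ∈ A, ∀ y ∈ A, |⟪e, x - y⟫| ≤ K * ‖π x - π y‖ := fun x hx y hy => by
    refine abs_le.2 ⟨?_, hπ_sub x y ▸ hA x hx y hy⟩
    have := hA y hy x hx
    rw [← hπ_sub, norm_sub_rev, ← neg_sub x y, inner_neg_right] at this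
    linarith
  set τ₀ : E → ℝ := fun z => ⟪e, Function.invFunOn π A z⟫
  have hτ₀ : ∀ x ∈ A, τ₀ (π x) = ⟪e, x⟫ := fun x hx => by
    have hmem : ∃ a ∈ A, π a = π x := ⟨x, hx, rfl⟩
    have := habs _ (Function.invFunOn_mem hmem) x hx
    rw [Function.invFunOn_eq hmem, sub_self, norm_zero, mul_zero, abs_nonpos_iff,
      inner_sub_right, sub_eq_zero] at this
    exact this
  have hlip : LipschitzOnWith K.toNNReal τ₀ (π '' A) := by
    refine LipschitzOnWith.of_dist_le' ?_
    rintro _ ⟨x, hx, rfl⟩ _ ⟨y, hy, rfl⟩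
    rw [hτ₀ x hx, hτ₀ y hy, Real.dist_eq, ← inner_sub_right, dist_eq_norm]
    exact habs x hx y hy
  obtain ⟨τ, hτ, hττ₀⟩ := hlip.extend_real
  refine ⟨_, ⟨e, norm_ne_zero_iff.1 (he ▸ one_ne_zero), τ, _, hτ.lipschitzOnWith, rfl⟩,
    fun x hx => ⟨π x, ?_, ?_⟩⟩
  · rw [SetLike.mem_coe, Submodule.mem_orthogonal_singleton_iff_inner_right]
    simp [π, inner_sub_right, real_inner_smul_right, he]
  · show π x + τ (π x) • e = x
    rw [← hττ₀ (mem_image_of_mem π hx), hτ₀ x hx]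
    simp [π]

theorem alexandrov_part_three_general
    {H : Type*} [NormedAddCommGroup H] [InnerProductSpace ℝ H]
    [CompleteSpace H]
    (f g : H → EReal) (hf : ProperLscConvex f) (hg : ProperLscConvex g)
    (p : H) (u₀ : H)
    (hfp : subdiff f p = {u₀}) (hgp : subdiff g p = {(0 : H)})
    (hne : u₀ ≠ 0)
    (hfp0 : f p = 0) (hgp0 : g p = 0)
    (hfc : ContinuousAt f p) (hgc : ContinuousAt g p) :
    ∃ U : Set H, IsOpen U ∧ p ∈ U ∧
      ∃ S : Set H, IsLipschitzHypersurface S ∧ {x ∈ U | f x = g x} ⊆ S := by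
  obtain ⟨-, hfbot, -, hfconv⟩ := hf
  obtain ⟨-, hgbot, -, hgconv⟩ := hg
  obtain ⟨Rf, hRf, Lf, hF, hFL, hFs⟩ :=
    hfconv.exists_ball_lipschitzOnWith_radialSlope_lt hfbot hfc hfp0 hfp
  obtain ⟨Rg, hRg, Lg, hG, hGL, hGs⟩ :=
    hgconv.exists_ball_lipschitzOnWith_radialSlope_lt hgbot hgc hgp0 hgp
  set e := ‖u₀‖⁻¹ • u₀
  have he : ‖e‖ = 1 := norm_smul_inv_norm hne
  have hu₀e : ⟪u₀, -e⟫ = -‖u₀‖ := by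
    rw [inner_neg_right, real_inner_smul_right, real_inner_self_eq_norm_sq,
      inv_mul_eq_div, sq, mul_self_div_self]
  have hRF := ball_subset_ball (x := p) (min_le_left Rf Rg)
  have hRG := ball_subset_ball (x := p) (min_le_right Rf Rg)
  obtain ⟨ρ, hρ, K, hK⟩ := exists_ball_inner_le_of_eq (lt_min hRf hRg)
    (hF.subset hRF (convex_ball _ _)) (hG.subset hRG (convex_ball _ _))
    ((hFL.mono hRF).weaken (le_max_left Lf Lg)) ((hGL.mono hRG).weaken (le_max_right Lf Lg)) he
    (fun ε hε => by simpa only [hu₀e] using hFs (-e) ε hε)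
    (fun ε hε => by simpa only [inner_zero_left] using hGs e ε hε) (norm_pos_iff.2 hne)
  exact ⟨ball p ρ, isOpen_ball, mem_ball_self hρ,
    exists_isLipschitzHypersurface_superset_of_inner_le he fun x hx y hy =>
      hK x hx.1 y hy.1 (congrArg EReal.toReal hx.2) (congrArg EReal.toReal hy.2)⟩

theorem alexandrov_part_three
    {H : Type*} [NormedAddCommGroup H] [InnerProductSpace ℝ H]
    [CompleteSpace H] [SecondCountableTopology H]
    (f g : H → EReal) (hf : ProperLscConvex f) (hg : ProperLscConvex g)
    (p : H) (u₀ : H)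
    (hfp : subdiff f p = {u₀}) (hgp : subdiff g p = {(0 : H)})
    (hne : u₀ ≠ 0)
    (hfp0 : f p = 0) (hgp0 : g p = 0)
    (hfc : ContinuousAt f p) (hgc : ContinuousAt g p) :
    ∃ U : Set H, IsOpen U ∧ p ∈ U ∧
      ∃ S : Set H, IsLipschitzHypersurface S ∧ {x ∈ U | f x = g x} ⊆ S :=
  alexandrov_part_three_general f g hf hg p u₀ hfp hgp hne hfp0 hgp0 hfc hgc

end
end

section
/- Let H be a real separable Hilbert space, let U ⊆ H be a nonempty open connected set, and let ψ, f : H → (-∞,+∞] be proper lower semicontinuous convex functions with U contained in the interior of dom(ψ) intersected with the interior of dom(f). Suppose there is a set D dense in U such that every x ∈ D is a point where both ∂ψ(x) and ∂f(x) are singletons and ∇ψ(x) = ∇f(x). Then there exists a constant a ∈ ℝ such that ψ(x) = f(x) + a for all x ∈ U. -/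
open MeasureTheory Filter Topology

noncomputable section

/-!
On `U` both potentials are finite, so their real parts `φ = ψ.toReal` and `χ = f.toReal` are
convex on every ball in `U`. By Baire's theorem a lower semicontinuous convex function that is
finite on an open set is bounded above near some point, hence locally Lipschitz on the whole
(convex) set, and so its subgradients are locally bounded. If `v, v'` are common subgradients of
`φ` and `χ` at `d, d'`, the subgradient inequalities give
`|(φ - χ) d' - (φ - χ) d| ≤ ⟪v' - v, d' - d⟫`. Along a chain `d₀, …, d_N` of points of `D` that
follows the segment from `x` to `y` in steps `(y - x) / N`, these bounds telescope to
`⟪v_N - v₀, (y - x) / N⟫` up to the approximation error, and both tend to `0`. So `φ - χ` is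
locally constant on `U`, hence constant since `U` is connected.
-/

open Metric Set Finset
open scoped RealInnerProductSpace NNReal

section Subgradients

variable {H : Type*} [NormedAddCommGroup H] [InnerProductSpace ℝ H]

def IsSubgradientOn (φ : H → ℝ) (s : Set H) (x v : H) : Prop :=
  ∀ z ∈ s, φ x + ⟪v, z - x⟫ ≤ φ z

lemma abs_sub_sub_le_inner {φ χ : H → ℝ} {s : Set H} {d d' v v' : H}
    (hφ : IsSubgradientOn φ s d v) (hφ' : IsSubgradientOn φ s d' v')
    (hχ : IsSubgradientOn χ s d v) (hχ' : IsSubgradientOn χ s d' v') (hd : d ∈ s) (hd' : d' ∈ s) :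
    |(φ d' - χ d') - (φ d - χ d)| ≤ ⟪v' - v, d' - d⟫ := by
  have hflip : ⟪v', d - d'⟫ = -⟪v', d' - d⟫ := by rw [← inner_neg_right, neg_sub]
  have h₁ := hφ d' hd'
  have h₂ := hφ' d hd
  have h₃ := hχ d' hd'
  have h₄ := hχ' d hd
  rw [hflip] at h₂ h₄
  rw [inner_sub_left, abs_le]
  constructor <;> linarith

lemma IsSubgradientOn.norm_le_of_lipschitzOnWith {φ : H → ℝ} {s : Set H} {d v : H} {K : ℝ≥0}
    (hv : IsSubgradientOn φ s d v) (hφ : LipschitzOnWith K φ s) (hs : s ∈ 𝓝 d) : ‖v‖ ≤ K := by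
  have hline : ∀ᶠ t in 𝓝[>] (0 : ℝ), d + t • v ∈ s := by
    have : Tendsto (fun t : ℝ => d + t • v) (𝓝 0) (𝓝 d) := by
      simpa using ((continuous_id.smul continuous_const).const_add d).tendsto (0 : ℝ)
    exact nhdsWithin_le_nhds (this.eventually hs)
  obtain ⟨t, hts, ht⟩ := (hline.and self_mem_nhdsWithin).exists
  have hsub : t * ‖v‖ ^ 2 ≤ φ (d + t • v) - φ d := by
    have := hv _ hts
    rw [add_sub_cancel_left, real_inner_smul_right, real_inner_self_eq_norm_sq] at this
    linarith
  have hlip : φ (d + t • v) - φ d ≤ K * (t * ‖v‖) := by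
    have := hφ.dist_le_mul _ hts d (mem_of_mem_nhds hs)
    rw [Real.dist_eq, dist_eq_norm, add_sub_cancel_left, norm_smul, Real.norm_of_nonneg ht.le]
      at this
    exact (le_abs_self _).trans this
  have ht : 0 < t := ht
  by_contra! hKv
  nlinarith [mul_pos (mul_pos ht (sub_pos.2 hKv)) (K.2.trans_lt hKv)]

end Subgradients

section Chains

variable {H : Type*} [NormedAddCommGroup H] [InnerProductSpace ℝ H]

lemma abs_sub_le_of_chain {g : H → ℝ} {d v : ℕ → H} {Δ : H} {L τ : ℝ} {N : ℕ}
    (hstep : ∀ i < N, |g (d (i + 1)) - g (d i)| ≤ ⟪v (i + 1) - v i, d (i + 1) - d i⟫)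
    (hv : ∀ i, ‖v i‖ ≤ L) (hd : ∀ i < N, ‖d (i + 1) - d i - Δ‖ ≤ τ) :
    |g (d N) - g (d 0)| ≤ 2 * L * ‖Δ‖ + 2 * L * τ * N := by
  have hdiff : ∀ i j, ‖v i - v j‖ ≤ 2 * L := fun i j =>
    (norm_sub_le _ _).trans (by linarith [hv i, hv j])
  have hL : 0 ≤ 2 * L := (norm_nonneg _).trans (hdiff 0 0)
  calc |g (d N) - g (d 0)| = |∑ i ∈ range N, (g (d (i + 1)) - g (d i))| := by
        rw [sum_range_sub (fun i => g (d i))]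
    _ ≤ ∑ i ∈ range N, |g (d (i + 1)) - g (d i)| := abs_sum_le_sum_abs _ _
    _ ≤ ∑ i ∈ range N, (⟪v (i + 1) - v i, Δ⟫ + 2 * L * τ) := by
        refine sum_le_sum fun i hi => ?_
        have hi := mem_range.1 hi
        calc |g (d (i + 1)) - g (d i)| ≤ ⟪v (i + 1) - v i, d (i + 1) - d i⟫ := hstep i hi
          _ = ⟪v (i + 1) - v i, Δ⟫ + ⟪v (i + 1) - v i, d (i + 1) - d i - Δ⟫ := by
              rw [← inner_add_right, add_sub_cancel]
          _ ≤ ⟪v (i + 1) - v i, Δ⟫ + 2 * L * τ := by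
              gcongr
              exact (real_inner_le_norm _ _).trans
                (mul_le_mul (hdiff _ _) (hd i hi) (norm_nonneg _) hL)
    _ = ⟪v N - v 0, Δ⟫ + 2 * L * τ * N := by
        rw [sum_add_distrib, ← sum_inner, sum_range_sub v, sum_const, card_range, nsmul_eq_mul]
        ring
    _ ≤ 2 * L * ‖Δ‖ + 2 * L * τ * N := by
        gcongr
        exact (real_inner_le_norm _ _).trans
          (mul_le_mul_of_nonneg_right (hdiff _ _) (norm_nonneg _))

lemma exists_chain_near_segment {D : Set H} {x y : H} {r σ : ℝ} {N : ℕ}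
    (hD : ball x r ⊆ closure D) (hN : 0 < N) (hσ : 0 < σ) (hσr : σ ≤ r - dist y x) :
    ∃ d : ℕ → H, (∀ i, d i ∈ D ∩ ball x r) ∧
      (∀ i < N, ‖d (i + 1) - d i - (N : ℝ)⁻¹ • (y - x)‖ ≤ 2 * σ) ∧
      dist (d 0) x < σ ∧ dist (d N) y < σ := by
  -- capping the index at `N` keeps every `p i` on the segment, so `d` can be chosen on all of `ℕ`
  set p : ℕ → H := fun i => x + ((min i N : ℕ) / N : ℝ) • (y - x) with hp
  have hN' : (0 : ℝ) < N := Nat.cast_pos.2 hN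
  have hpx : ∀ i, dist (p i) x ≤ dist y x := by
    intro i
    rw [hp, dist_eq_norm, add_sub_cancel_left, norm_smul, ← dist_eq_norm,
      Real.norm_of_nonneg (by positivity)]
    refine mul_le_of_le_one_left dist_nonneg ((div_le_one hN').2 ?_)
    exact_mod_cast min_le_right i N
  have hpD : ∀ i, p i ∈ closure D := fun i =>
    hD (mem_ball.2 ((hpx i).trans_lt (by linarith)))
  choose d hdD hdp using fun i => Metric.mem_closure_iff.1 (hpD i) σ hσ
  have hdp' : ∀ i, ‖d i - p i‖ < σ := fun i => by rw [← dist_eq_norm, dist_comm]; exact hdp i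
  have hstep : ∀ i < N, p (i + 1) - p i = (N : ℝ)⁻¹ • (y - x) := by
    intro i hi
    simp only [hp, min_eq_left hi.le, min_eq_left (Nat.succ_le_of_lt hi), add_sub_add_left_eq_sub,
      ← sub_smul, Nat.cast_succ]
    congr 1
    field_simp
    ring
  refine ⟨d, fun i => ⟨hdD i, ?_⟩, fun i hi => ?_, ?_, ?_⟩
  · calc dist (d i) x ≤ dist (d i) (p i) + dist (p i) x := dist_triangle _ _ _
      _ < σ + dist y x := by rw [dist_comm]; exact add_lt_add_of_lt_of_le (hdp i) (hpx i)
      _ ≤ r := by linarith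
  · rw [← hstep i hi, show d (i + 1) - d i - (p (i + 1) - p i)
        = (d (i + 1) - p (i + 1)) - (d i - p i) by abel]
    exact (norm_sub_le _ _).trans (by linarith [hdp' i, hdp' (i + 1)])
  · simpa [hp, dist_comm] using hdp 0
  · simpa [hp, dist_comm, hN'.ne'] using hdp N

end Chains

lemma eq_of_forall_exists_dist_lt {X : Type*} [PseudoMetricSpace X] {g : X → ℝ} {x y : X}
    (hx : ContinuousAt g x) (hy : ContinuousAt g y)
    (h : ∀ η > 0, ∃ a b, dist a x < η ∧ dist b y < η ∧ |g b - g a| ≤ η) : g y = g x := by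
  choose a b ha hb hab using fun n : ℕ => h (1 / (n + 1)) Nat.one_div_pos_of_nat
  have hlim : ∀ {c : ℕ → X} {z : X}, (∀ n, dist (c n) z < 1 / (n + 1)) → Tendsto c atTop (𝓝 z) :=
    fun hc => tendsto_iff_dist_tendsto_zero.2 <| squeeze_zero (fun _ => dist_nonneg)
      (fun n => (hc n).le) tendsto_one_div_add_atTop_nhds_zero_nat
  have hconv : Tendsto (fun n => |g (b n) - g (a n)|) atTop (𝓝 |g y - g x|) :=
    ((hy.tendsto.comp (hlim hb)).sub (hx.tendsto.comp (hlim ha))).abs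
  have := le_of_tendsto_of_tendsto hconv tendsto_one_div_add_atTop_nhds_zero_nat
    (Eventually.of_forall hab)
  exact sub_eq_zero.1 (abs_nonpos_iff.1 this)

section Potentials

variable {H : Type*} [NormedAddCommGroup H] [InnerProductSpace ℝ H]

lemma sub_eq_sub_of_common_subgradients {φ χ : H → ℝ} {D : Set H} {x y : H} {r : ℝ} {L : ℝ≥0}
    (hφ : ContinuousOn φ (ball x r)) (hχ : ContinuousOn χ (ball x r))
    (hD : ball x r ⊆ closure D)
    (hgrad : ∀ d ∈ D ∩ ball x r, ∃ v, ‖v‖ ≤ L ∧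
      IsSubgradientOn φ (ball x r) d v ∧ IsSubgradientOn χ (ball x r) d v)
    (hy : y ∈ ball x r) : φ y - χ y = φ x - χ x := by
  have hr : 0 < r := pos_of_mem_ball hy
  have hcont : ContinuousOn (fun z => φ z - χ z) (ball x r) := hφ.sub hχ
  refine eq_of_forall_exists_dist_lt (g := fun z => φ z - χ z)
    (hcont.continuousAt (ball_mem_nhds x hr)) (hcont.continuousAt (isOpen_ball.mem_nhds hy))
    fun η hη => ?_
  obtain ⟨N, hN⟩ := exists_nat_gt (4 * L * dist y x / η)
  have hN' : (0 : ℝ) < N := lt_of_le_of_lt (by positivity) hN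
  set σ := min (r - dist y x) (η / (8 * L * N + 1))
  have hσ : 0 < σ := lt_min (sub_pos.2 (mem_ball.1 hy)) (by positivity)
  have hση : σ * (8 * L * N + 1) ≤ η := (le_div_iff₀ (by positivity)).1 (min_le_right _ _)
  obtain ⟨d, hd, hdΔ, hd0, hdN⟩ :=
    exists_chain_near_segment hD (Nat.cast_pos.1 hN') hσ (min_le_left _ _)
  choose v hvL hvφ hvχ using fun i => hgrad (d i) (hd i)
  have hchain := abs_sub_le_of_chain (g := fun z => φ z - χ z)
    (fun i _ => abs_sub_sub_le_inner (hvφ i) (hvφ (i + 1)) (hvχ i) (hvχ (i + 1)) (hd i).2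
      (hd (i + 1)).2) hvL hdΔ
  have hΔ : ‖(N : ℝ)⁻¹ • (y - x)‖ * N = dist y x := by
    rw [norm_smul, norm_inv, Real.norm_natCast, ← dist_eq_norm]
    field_simp
  have hdist : 4 * L * dist y x < N * η := (div_lt_iff₀ hη).1 hN
  have hσ_le : σ ≤ η := by nlinarith [mul_nonneg (mul_nonneg hσ.le L.coe_nonneg) hN'.le]
  have hsegment : 2 * L * ‖(N : ℝ)⁻¹ • (y - x)‖ ≤ η / 2 := by
    refine le_of_mul_le_mul_right ?_ hN'
    calc 2 * L * ‖(N : ℝ)⁻¹ • (y - x)‖ * N = 2 * L * dist y x := by rw [mul_assoc _ ‖_‖, hΔ]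
      _ ≤ η / 2 * N := by linarith
  refine ⟨d 0, d N, hd0.trans_le hσ_le, hdN.trans_le hσ_le, hchain.trans ?_⟩
  linarith

lemma EConvexOn.convexOn_of_eq_coe {ψ : H → EReal} {φ : H → ℝ} {s : Set H} (hψ : EConvexOn ψ)
    (hs : Convex ℝ s) (hφ : ∀ x ∈ s, ψ x = φ x) : ConvexOn ℝ s φ := by
  refine ⟨hs, fun x hx y hy a b ha hb hab => ?_⟩
  obtain rfl : b = 1 - a := by linarith
  have h := hψ x y a ha (by linarith)
  rw [hφ x hx, hφ y hy, hφ _ (hs hx hy ha hb hab)] at h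
  exact_mod_cast h

lemma isSubgradientOn_of_mem_subdiff {ψ : H → EReal} {φ : H → ℝ} {s : Set H} {d v : H}
    (hv : v ∈ subdiff ψ d) (hφ : ∀ x ∈ s, ψ x = φ x) (hd : d ∈ s) :
    IsSubgradientOn φ s d v := fun z hz => by
  have := hv z
  rw [hφ d hd, hφ z hz] at this
  exact_mod_cast this

lemma LowerSemicontinuous.exists_isBoundedUnder_le {X : Type*} [TopologicalSpace X]
    [BaireSpace X] {f : X → EReal} {φ : X → ℝ} {s : Set X} (hf : LowerSemicontinuous f)
    (hs : IsOpen s) (hne : s.Nonempty) (hφ : ∀ x ∈ s, f x = φ x) :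
    ∃ p ∈ s, (𝓝 p).IsBoundedUnder (· ≤ ·) φ := by
  -- adjoining the closed set `sᶜ` makes the closed sublevel sets cover all of `X`
  set B : ℕ → Set X := fun n => {y | f y ≤ n} ∪ sᶜ
  have hclosed : ∀ n, IsClosed (B n) := fun n =>
    (hf.isClosed_preimage _).union hs.isClosed_compl
  have hcover : ⋃ n, B n = univ := by
    refine eq_univ_of_forall fun y => mem_iUnion.2 ?_
    by_cases hy : y ∈ s
    · refine ⟨⌈φ y⌉₊, Or.inl ?_⟩
      show f y ≤ ((⌈φ y⌉₊ : ℝ) : EReal)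
      rw [hφ y hy]
      exact EReal.coe_le_coe_iff.2 (Nat.le_ceil _)
    · exact ⟨0, Or.inr hy⟩
  obtain ⟨p, hps, hpB⟩ := (dense_iUnion_interior_of_closed hclosed hcover).inter_open_nonempty
    s hs hne
  obtain ⟨n, hpn⟩ := mem_iUnion.1 hpB
  refine ⟨p, hps, n, eventually_map.2 ?_⟩
  filter_upwards [interior_mem_nhds.2 (mem_interior_iff_mem_nhds.1 hpn), hs.mem_nhds hps]
    with y hyB hys
  rcases interior_subset hyB with hyn | hyn
  · have : f y ≤ (n : ℝ) := hyn
    rw [hφ y hys] at this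
    exact EReal.coe_le_coe_iff.1 this
  · exact absurd hys hyn

lemma EConvexOn.locallyLipschitzOn_of_eq_coe [BaireSpace H] {ψ : H → EReal} {φ : H → ℝ}
    {s : Set H} (hψ : EConvexOn ψ) (hlsc : LowerSemicontinuous ψ) (hs : IsOpen s)
    (hs' : Convex ℝ s) (hne : s.Nonempty) (hφ : ∀ x ∈ s, ψ x = φ x) : LocallyLipschitzOn s φ := by
  have hbdd : ∃ p ∈ s, (𝓝 p).IsBoundedUnder (· ≤ ·) φ :=
    hlsc.exists_isBoundedUnder_le hs hne hφ
  exact ((hψ.convexOn_of_eq_coe hs' hφ).continuousOn_tfae hs hne).out 3 0 |>.1 hbdd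

lemma eventually_sub_eq_of_subdiff_eq [CompleteSpace H] {ψ f : H → EReal} {φ χ : H → ℝ}
    {U D : Set H} (hψlsc : LowerSemicontinuous ψ) (hψconv : EConvexOn ψ)
    (hflsc : LowerSemicontinuous f) (hfconv : EConvexOn f) (hUo : IsOpen U)
    (hψφ : ∀ x ∈ U, ψ x = φ x) (hfχ : ∀ x ∈ U, f x = χ x) (hdense : U ⊆ closure D)
    (hgrad : ∀ x ∈ D, ∃ y : H, subdiff ψ x = {y} ∧ subdiff f x = {y}) {x : H} (hx : x ∈ U) :
    ∀ᶠ y in 𝓝 x, φ x - χ x = φ y - χ y := by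
  obtain ⟨r, hr, hrU⟩ := Metric.isOpen_iff.1 hUo x hx
  have hxr := mem_ball_self (x := x) hr
  have hφ := hψconv.locallyLipschitzOn_of_eq_coe hψlsc isOpen_ball (convex_ball x r)
    (nonempty_ball.2 hr) fun y hy => hψφ y (hrU hy)
  have hχ := hfconv.locallyLipschitzOn_of_eq_coe hflsc isOpen_ball (convex_ball x r)
    (nonempty_ball.2 hr) fun y hy => hfχ y (hrU hy)
  obtain ⟨K, t, ht, hK⟩ := hφ hxr
  rw [isOpen_ball.nhdsWithin_eq hxr] at ht
  obtain ⟨ε, hε, hεt⟩ := Metric.mem_nhds_iff.1 (inter_mem ht (ball_mem_nhds x hr))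
  have hεU : ball x ε ⊆ U := fun y hy => hrU (hεt hy).2
  filter_upwards [ball_mem_nhds x hε] with y hy
  refine (sub_eq_sub_of_common_subgradients (L := K)
    (hφ.continuousOn.mono fun z hz => (hεt hz).2) (hχ.continuousOn.mono fun z hz => (hεt hz).2)
    (hεU.trans hdense) ?_ hy).symm
  rintro d ⟨hdD, hdε⟩
  obtain ⟨v, hvψ, hvf⟩ := hgrad d hdD
  have hφv : IsSubgradientOn φ (ball x ε) d v :=
    isSubgradientOn_of_mem_subdiff (hvψ ▸ rfl) (fun z hz => hψφ z (hεU hz)) hdε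
  exact ⟨v, hφv.norm_le_of_lipschitzOnWith (hK.mono fun z hz => (hεt hz).1)
    (isOpen_ball.mem_nhds hdε), hφv,
    isSubgradientOn_of_mem_subdiff (hvf ▸ rfl) (fun z hz => hfχ z (hεU hz)) hdε⟩

end Potentials

theorem potentials_agree_up_to_constant_general
    {H : Type*} [NormedAddCommGroup H] [InnerProductSpace ℝ H]
    [CompleteSpace H]
    (U : Set H) (hUo : IsOpen U) (hUconn : IsConnected U)
    (ψ f : H → EReal) (hψ : ProperLscConvex ψ) (hf : ProperLscConvex f)
    (hUdom : U ⊆ interior {x : H | ψ x ≠ ⊤} ∩ interior {x : H | f x ≠ ⊤})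
    (D : Set H) (hdense : U ⊆ closure D)
    (hgrad : ∀ x ∈ D, ∃ y : H, subdiff ψ x = {y} ∧ subdiff f x = {y}) :
    ∃ a : ℝ, ∀ x ∈ U, ψ x = f x + (a : EReal) := by
  obtain ⟨-, hψbot, hψlsc, hψconv⟩ := hψ
  obtain ⟨-, hfbot, hflsc, hfconv⟩ := hf
  have hψφ : ∀ x ∈ U, ψ x = (ψ x).toReal := fun x hx =>
    (EReal.coe_toReal (interior_subset (hUdom hx).1) (hψbot x)).symm
  have hfχ : ∀ x ∈ U, f x = (f x).toReal := fun x hx =>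
    (EReal.coe_toReal (interior_subset (hUdom hx).2) (hfbot x)).symm
  obtain ⟨x₀, hx₀⟩ := hUconn.nonempty
  refine ⟨(ψ x₀).toReal - (f x₀).toReal, fun x hx => ?_⟩
  have hconst : (ψ x₀).toReal - (f x₀).toReal = (ψ x).toReal - (f x).toReal :=
    hUconn.isPreconnected.induction₂
      (fun a b => (ψ a).toReal - (f a).toReal = (ψ b).toReal - (f b).toReal)
      (fun z hz => nhdsWithin_le_nhds (eventually_sub_eq_of_subdiff_eq hψlsc hψconv hflsc hfconv
        hUo hψφ hfχ hdense hgrad hz))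
      (fun _ _ _ _ _ _ => Eq.trans) (fun _ _ _ _ => Eq.symm) hx₀ hx
  rw [hψφ x hx, hfχ x hx, ← EReal.coe_add]
  congr 1
  linarith

theorem potentials_agree_up_to_constant
    {H : Type*} [NormedAddCommGroup H] [InnerProductSpace ℝ H]
    [CompleteSpace H] [SecondCountableTopology H]
    (U : Set H) (hUo : IsOpen U) (hUne : U.Nonempty) (hUconn : IsConnected U)
    (ψ f : H → EReal) (hψ : ProperLscConvex ψ) (hf : ProperLscConvex f)
    (hUdom : U ⊆ interior {x : H | ψ x ≠ ⊤} ∩ interior {x : H | f x ≠ ⊤})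
    (D : Set H) (hDU : D ⊆ U) (hdense : U ⊆ closure D)
    (hgrad : ∀ x ∈ D, ∃ y : H, subdiff ψ x = {y} ∧ subdiff f x = {y}) :
    ∃ a : ℝ, ∀ x ∈ U, ψ x = f x + (a : EReal) :=
  potentials_agree_up_to_constant_general U hUo hUconn ψ f hψ hf hUdom D hdense hgrad
end
end
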